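/- arXiv:2109.08709 — 6 statements merged into one kernel-verified Lean document; each statement's English description precedes it below -/
import Mathlib

section
/- (Theorem 2.2(iii).) Under Assumption 2.1, fix 1 ≤ a, b ≤ p with a ≠ b, let P_{ab} be the orthogonal projection onto the closed linear span of {x_{(s,c)} : s ∈ ℤ, c ∉ {a,b}}, and for c, d ∈ {a,b} write ρ^{(c,d)|−{a,b}}_{t,τ} = ⟨x_{(t,c)} − P_{ab} x_{(t,c)}, x_{(τ,d)} − P_{ab} x_{(τ,d)}⟩. Then the blocks D_{a,a}, D_{b,b} and D_{a,b} are all Toeplitz if and only if ρ^{(a,a)|−{a,b}}_{t,τ}, ρ^{(b,b)|−{a,b}}_{t,τ} and ρ^{(a,b)|−{a,b}}_{t,τ} each depend only on t − τ. -/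
open scoped InnerProductSpace ENNReal NNReal

noncomputable section

abbrev Ell2p (p : ℕ) : Type := lp (fun _ : ℤ × Fin p => ℝ) 2

noncomputable def e2p (p : ℕ) (i : ℤ × Fin p) : Ell2p p := lp.single 2 i 1

abbrev Ell2Z : Type := lp (fun _ : ℤ => ℝ) 2

noncomputable def eZ (t : ℤ) : Ell2Z := lp.single 2 t 1

def gramQuadSet {H : Type*} [NormedAddCommGroup H] [InnerProductSpace ℝ H]
    {p : ℕ} (x : ℤ × Fin p → H) : Set ℝ :=
  {r : ℝ | ∃ v : (ℤ × Fin p) →₀ ℝ,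
      (∑ i ∈ v.support, (v i) ^ 2) = 1 ∧ ‖∑ i ∈ v.support, v i • x i‖ ^ 2 = r}

def IsResidual {H : Type*} [NormedAddCommGroup H] [InnerProductSpace ℝ H]
    (S : Set H) (y r : H) : Prop :=
  (y - r) ∈ (Submodule.span ℝ S).topologicalClosure ∧ ∀ z ∈ S, ⟪r, z⟫_ℝ = 0




/-- Orthogonality to a generating set passes to the topological closure of its span. -/
lemma inner_eq_zero_of_closure_span {H : Type*} [NormedAddCommGroup H]
    [InnerProductSpace ℝ H] (S : Set H) (v : H)
    (h : ∀ z ∈ S, ⟪v, z⟫_ℝ = 0) :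
    ∀ m ∈ (Submodule.span ℝ S).topologicalClosure, ⟪v, m⟫_ℝ = 0 := by
  have hK : (Submodule.span ℝ S).topologicalClosure ≤ LinearMap.ker (innerSL ℝ v).toLinearMap := by
    apply Submodule.topologicalClosure_minimal
    · rw [Submodule.span_le]
      intro z hz
      simpa [LinearMap.mem_ker] using h z hz
    · exact ContinuousLinearMap.isClosed_ker (innerSL ℝ v)
  intro m hm
  simpa [LinearMap.mem_ker] using hK hm

lemma eq_zero_of_mem_closure_span_orth {H : Type*} [NormedAddCommGroup H]
    [InnerProductSpace ℝ H] {S : Set H} {z : H}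
    (hz : z ∈ (Submodule.span ℝ S).topologicalClosure)
    (h : ∀ s ∈ S, ⟪z, s⟫_ℝ = 0) : z = 0 := by
  have := inner_eq_zero_of_closure_span S z h z hz
  exact inner_self_eq_zero.mp this

lemma shift_iterate (f : ℤ → ℤ → ℝ) (h : ∀ t τ : ℤ, f t τ = f (t + 1) (τ + 1)) :
    ∀ t τ t' τ' : ℤ, t - τ = t' - τ' → f t τ = f t' τ' := by
  have key : ∀ n t τ : ℤ, f t τ = f (t + n) (τ + n) := by
    intro n
    induction n using Int.induction_on with
    | zero => simp
    | succ k ih =>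
        intro t τ
        rw [ih t τ, h (t + k) (τ + k)]
        ring_nf
    | pred k ih =>
        intro t τ
        have h1 := h (t + (-(k : ℤ) - 1)) (τ + (-(k : ℤ) - 1))
        rw [show t + (-(k : ℤ) - 1) + 1 = t + -(k : ℤ) by ring,
          show τ + (-(k : ℤ) - 1) + 1 = τ + -(k : ℤ) by ring] at h1
        rw [ih t τ, ← h1]
  intro t τ t' τ' hd
  have e1 : t + (t' - t) = t' := by ring
  have e2 : τ + (t' - t) = τ' := by omega
  rw [key (t' - t) t τ, e1, e2]
open Filter

section
variable {H : Type*} [NormedAddCommGroup H] [InnerProductSpace ℝ H] [CompleteSpace H]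

/-- If `u` has a shift-invariant Gram kernel, `w` is biorthogonal to `u`, and each `w j`
lies in the closed span of the `u`'s, then `w` also has a shift-invariant Gram kernel. -/
lemma core_dual_shift {I : Type*} [DecidableEq I] (σ : I ≃ I) (u w : I → H)
    (hGram : ∀ i j, ⟪u (σ i), u (σ j)⟫_ℝ = ⟪u i, u j⟫_ℝ)
    (hbi : ∀ i j, ⟪u i, w j⟫_ℝ = if i = j then 1 else 0)
    (hspan : ∀ j, w j ∈ (Submodule.span ℝ (Set.range u)).topologicalClosure) :
    ∀ i j, ⟪w (σ i), w (σ j)⟫_ℝ = ⟪w i, w j⟫_ℝ := by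
  classical
  set Lu : (I →₀ ℝ) →ₗ[ℝ] H := Finsupp.linearCombination ℝ u with hLu
  set Lσ : (I →₀ ℝ) →ₗ[ℝ] H := Finsupp.linearCombination ℝ (fun i => u (σ i)) with hLσ
  have expand : ∀ (v v' : I → H) (c d : I →₀ ℝ),
      ⟪Finsupp.linearCombination ℝ v c, Finsupp.linearCombination ℝ v' d⟫_ℝ =
        ∑ i ∈ c.support, ∑ j ∈ d.support, c i * d j * ⟪v i, v' j⟫_ℝ := by
    intro v v' c d
    rw [Finsupp.linearCombination_apply, Finsupp.linearCombination_apply, Finsupp.sum,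
      Finsupp.sum, sum_inner]
    refine Finset.sum_congr rfl fun i _ => ?_
    rw [inner_sum]
    refine Finset.sum_congr rfl fun j _ => ?_
    rw [real_inner_smul_left, real_inner_smul_right]; ring
  have hP1 : ∀ c d : I →₀ ℝ, ⟪Lσ c, Lσ d⟫_ℝ = ⟪Lu c, Lu d⟫_ℝ := by
    intro c d
    rw [hLu, hLσ, expand, expand]
    exact Finset.sum_congr rfl fun i _ => Finset.sum_congr rfl fun j _ => by rw [hGram]
  have hP2 : ∀ (c : I →₀ ℝ) (k : I), ⟪Lσ c, u (σ k)⟫_ℝ = ⟪Lu c, u k⟫_ℝ := by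
    intro c k
    rw [hLu, hLσ, Finsupp.linearCombination_apply, Finsupp.linearCombination_apply,
      Finsupp.sum, Finsupp.sum, sum_inner, sum_inner]
    exact Finset.sum_congr rfl fun i _ => by
      rw [real_inner_smul_left, real_inner_smul_left, hGram]
  have memspan : ∀ c : I →₀ ℝ, Lσ c ∈ Submodule.span ℝ (Set.range u) := by
    intro c
    have h1 : Lσ c ∈ Submodule.span ℝ (Set.range fun i => u (σ i)) :=
      Finsupp.mem_span_range_iff_exists_finsupp.mpr
        ⟨c, by rw [hLσ, Finsupp.linearCombination_apply]⟩
    exact Submodule.span_mono (Set.range_comp_subset_range σ u) h1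
  have approx : ∀ j, ∃ c : ℕ → (I →₀ ℝ),
      Tendsto (fun n => Lu (c n)) atTop (nhds (w j)) := by
    intro j
    have hw : w j ∈ closure ((Submodule.span ℝ (Set.range u) : Submodule ℝ H) : Set H) := by
      rw [← Submodule.topologicalClosure_coe]; exact hspan j
    obtain ⟨g, hg_mem, hg_tend⟩ := mem_closure_iff_seq_limit.mp hw
    choose c hc using fun n => Finsupp.mem_span_range_iff_exists_finsupp.mp (hg_mem n)
    refine ⟨c, ?_⟩
    have : (fun n => Lu (c n)) = g := funext fun n => by
      rw [hLu, Finsupp.linearCombination_apply]; exact hc n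
    rw [this]; exact hg_tend
  have shifted : ∀ (j) (c : ℕ → (I →₀ ℝ)),
      Tendsto (fun n => Lu (c n)) atTop (nhds (w j)) →
      Tendsto (fun n => Lσ (c n)) atTop (nhds (w (σ j))) := by
    intro j c hc
    have keynorm : ∀ e : I →₀ ℝ, ‖Lσ e‖ = ‖Lu e‖ := by
      intro e
      have h2 : ‖Lσ e‖ ^ 2 = ‖Lu e‖ ^ 2 := by
        rw [← real_inner_self_eq_norm_sq, ← real_inner_self_eq_norm_sq, hP1]
      calc ‖Lσ e‖ = Real.sqrt (‖Lσ e‖ ^ 2) := (Real.sqrt_sq (norm_nonneg _)).symm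
        _ = Real.sqrt (‖Lu e‖ ^ 2) := by rw [h2]
        _ = ‖Lu e‖ := Real.sqrt_sq (norm_nonneg _)
    have hcauchy : CauchySeq (fun n => Lσ (c n)) := by
      have h1 : CauchySeq (fun n => Lu (c n)) := hc.cauchySeq
      rw [Metric.cauchySeq_iff] at h1 ⊢
      intro ε hε
      obtain ⟨N, hN⟩ := h1 ε hε
      refine ⟨N, fun m hm n hn => ?_⟩
      rw [dist_eq_norm, ← map_sub, keynorm, map_sub, ← dist_eq_norm]
      exact hN m hm n hn
    obtain ⟨z, hz⟩ := cauchySeq_tendsto_of_complete hcauchy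
    suffices hzw : z = w (σ j) by rwa [hzw] at hz
    have hzmem : z ∈ (Submodule.span ℝ (Set.range u)).topologicalClosure := by
      rw [← SetLike.mem_coe, Submodule.topologicalClosure_coe]
      exact mem_closure_of_tendsto hz (Filter.Eventually.of_forall fun n => memspan (c n))
    have hzu : ∀ m, ⟪z - w (σ j), u m⟫_ℝ = 0 := by
      intro m
      obtain ⟨k, rfl⟩ : ∃ k, σ k = m := ⟨σ.symm m, σ.apply_symm_apply m⟩
      have h1 : Tendsto (fun n => ⟪Lσ (c n), u (σ k)⟫_ℝ) atTop (nhds ⟪z, u (σ k)⟫_ℝ) :=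
        hz.inner tendsto_const_nhds
      have h3 : Tendsto (fun n => ⟪Lu (c n), u k⟫_ℝ) atTop (nhds ⟪w j, u k⟫_ℝ) :=
        hc.inner tendsto_const_nhds
      have h4 : (fun n => ⟪Lσ (c n), u (σ k)⟫_ℝ) = fun n => ⟪Lu (c n), u k⟫_ℝ :=
        funext fun n => hP2 (c n) k
      rw [h4] at h1
      have h5 : ⟪z, u (σ k)⟫_ℝ = ⟪w j, u k⟫_ℝ := tendsto_nhds_unique h1 h3
      have h6 : ⟪w (σ j), u (σ k)⟫_ℝ = ⟪w j, u k⟫_ℝ := by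
        rw [← real_inner_comm (w (σ j)) (u (σ k)), ← real_inner_comm (w j) (u k), hbi, hbi]
        simp [σ.injective.eq_iff]
      rw [inner_sub_left, h5, h6, sub_self]
    have hd : z - w (σ j) ∈ (Submodule.span ℝ (Set.range u)).topologicalClosure :=
      Submodule.sub_mem _ hzmem (hspan (σ j))
    have hzero : z - w (σ j) = 0 := by
      refine eq_zero_of_mem_closure_span_orth hd ?_
      rintro s ⟨m, rfl⟩
      exact hzu m
    rw [sub_eq_zero] at hzero
    exact hzero
  intro i j
  obtain ⟨c, hc⟩ := approx i
  obtain ⟨d, hd⟩ := approx j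
  have h1 : Tendsto (fun n => ⟪Lu (c n), Lu (d n)⟫_ℝ) atTop (nhds ⟪w i, w j⟫_ℝ) :=
    hc.inner hd
  have h2 : Tendsto (fun n => ⟪Lσ (c n), Lσ (d n)⟫_ℝ) atTop
      (nhds ⟪w (σ i), w (σ j)⟫_ℝ) := (shifted i c hc).inner (shifted j d hd)
  have h3 : (fun n => ⟪Lσ (c n), Lσ (d n)⟫_ℝ) = fun n => ⟪Lu (c n), Lu (d n)⟫_ℝ :=
    funext fun n => hP1 _ _
  rw [h3] at h2
  exact tendsto_nhds_unique h2 h1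

end


lemma coordR {p : ℕ} (v : Ell2p p) (i : ℤ × Fin p) : ⟪v, e2p p i⟫_ℝ = v i := by
  rw [e2p, lp.inner_single_right]; simp [RCLike.inner_apply]

lemma coordL {p : ℕ} (v : Ell2p p) (i : ℤ × Fin p) : ⟪e2p p i, v⟫_ℝ = v i := by
  rw [e2p, lp.inner_single_left]; simp [RCLike.inner_apply]

lemma hee {p : ℕ} (i j : ℤ × Fin p) :
    ⟪e2p p i, e2p p j⟫_ℝ = if i = j then 1 else 0 := by
  classical
  rw [coordL]
  by_cases h : i = j
  · subst h; simp [e2p, lp.single_apply_self]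
  · rw [e2p, lp.single_apply_ne 2 j 1 h, if_neg h]

lemma exists_synthesis {H : Type*} [NormedAddCommGroup H] [InnerProductSpace ℝ H]
    [CompleteSpace H] (p : ℕ) (x : ℤ × Fin p → H) (lamSup : ℝ)
    (C : Ell2p p →L[ℝ] Ell2p p)
    (hC : ∀ i j : ℤ × Fin p, ⟪C (e2p p j), e2p p i⟫_ℝ = ⟪x i, x j⟫_ℝ)
    (hhi : ∀ v : Ell2p p, ⟪C v, v⟫_ℝ ≤ lamSup * ‖v‖ ^ 2)
    (hlam0 : 0 ≤ lamSup) :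
    ∃ X : Ell2p p →L[ℝ] H, (∀ i, X (e2p p i) = x i) ∧
      (∀ u v : Ell2p p, ⟪X u, X v⟫_ℝ = ⟪u, C v⟫_ℝ) := by
  classical
  -- frame bound on finite sums
  have frame : ∀ (h : H) (s : Finset (ℤ × Fin p)),
      ∑ i ∈ s, ⟪x i, h⟫_ℝ ^ 2 ≤ lamSup * ‖h‖ ^ 2 := by
    intro h s
    by_cases hts : ∑ i ∈ s, ⟪x i, h⟫_ℝ ^ 2 = 0
    · rw [hts]; positivity
    set c : ℤ × Fin p → ℝ := fun i => ⟪x i, h⟫_ℝ with hc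
    set v : Ell2p p := ∑ i ∈ s, c i • e2p p i with hv
    set g : H := ∑ i ∈ s, c i • x i with hg
    have hvv : ⟪v, v⟫_ℝ = ∑ i ∈ s, c i ^ 2 := by
      rw [hv, sum_inner]
      refine Finset.sum_congr rfl fun i hi => ?_
      rw [real_inner_smul_left, inner_sum]
      simp_rw [real_inner_smul_right, hee, mul_ite, mul_one, mul_zero]
      rw [Finset.sum_ite_eq s i (fun j => c j), if_pos hi]
      ring
    have hCvv : ⟪C v, v⟫_ℝ = ⟪g, g⟫_ℝ := by
      rw [hv, hg, map_sum, sum_inner, sum_inner]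
      refine Finset.sum_congr rfl fun i hi => ?_
      rw [map_smul, real_inner_smul_left, real_inner_smul_left, inner_sum, inner_sum]
      congr 1
      refine Finset.sum_congr rfl fun j hj => ?_
      rw [real_inner_smul_right, real_inner_smul_right]
      congr 1
      rw [hC j i, real_inner_comm]
    have hgh : ⟪g, h⟫_ℝ = ∑ i ∈ s, c i ^ 2 := by
      rw [hg, sum_inner]
      refine Finset.sum_congr rfl fun i _ => ?_
      rw [real_inner_smul_left, show ⟪x i, h⟫_ℝ = c i from rfl]
      ring
    set t := ∑ i ∈ s, c i ^ 2 with htdef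
    have ht0 : 0 ≤ t := Finset.sum_nonneg fun i _ => sq_nonneg _
    have htpos : 0 < t := lt_of_le_of_ne ht0 (Ne.symm hts)
    have hCS : ⟪g, h⟫_ℝ ≤ ‖g‖ * ‖h‖ := real_inner_le_norm g h
    have h1 : t ≤ ‖g‖ * ‖h‖ := by rw [← hgh]; exact hCS
    have hgg : ‖g‖ ^ 2 = ⟪g, g⟫_ℝ := (real_inner_self_eq_norm_sq g).symm
    have hvnorm : ‖v‖ ^ 2 = t := by rw [← real_inner_self_eq_norm_sq, hvv]
    have hCb := hhi v
    have h2 : ‖g‖ ^ 2 * ‖h‖ ^ 2 ≤ lamSup * t * ‖h‖ ^ 2 := by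
      have : ‖g‖ ^ 2 ≤ lamSup * t := by rw [hgg, ← hCvv]; rw [hvnorm] at hCb; exact hCb
      nlinarith [sq_nonneg ‖h‖]
    have h3 : t * t ≤ (‖g‖ * ‖h‖) * (‖g‖ * ‖h‖) := mul_self_le_mul_self ht0 h1
    nlinarith [h2, h3, htpos]
  have hmemA : ∀ h : H, Memℓp (fun i : ℤ × Fin p => ⟪x i, h⟫_ℝ) 2 := by
    intro h
    apply memℓp_gen' (C := lamSup * ‖h‖ ^ 2)
    intro s
    calc ∑ i ∈ s, ‖⟪x i, h⟫_ℝ‖ ^ (2 : ℝ≥0∞).toReal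
        = ∑ i ∈ s, ⟪x i, h⟫_ℝ ^ 2 := by
          refine Finset.sum_congr rfl fun i _ => ?_
          rw [ENNReal.toReal_ofNat, show ((2 : ℝ)) = ((2 : ℕ) : ℝ) by norm_num,
            Real.rpow_natCast, Real.norm_eq_abs, sq_abs]
      _ ≤ lamSup * ‖h‖ ^ 2 := frame h s
  let A0 : H →ₗ[ℝ] Ell2p p :=
    { toFun := fun h => ⟨fun i => ⟪x i, h⟫_ℝ, hmemA h⟩
      map_add' := by
        intro h1 h2; apply lp.ext; funext i
        simp [inner_add_right]
        rfl
      map_smul' := by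
        intro m h; apply lp.ext; funext i
        simp [inner_smul_right] }
  have hA0apply : ∀ (h : H) (i), (A0 h : ∀ _ : ℤ × Fin p, ℝ) i = ⟪x i, h⟫_ℝ := fun h i => rfl
  have hA0norm : ∀ h, ‖A0 h‖ ≤ Real.sqrt lamSup * ‖h‖ := by
    intro h
    have hsum : ⟪A0 h, A0 h⟫_ℝ ≤ lamSup * ‖h‖ ^ 2 := by
      have he : ⟪A0 h, A0 h⟫_ℝ = ∑' i, ⟪x i, h⟫_ℝ ^ 2 := by
        rw [lp.inner_eq_tsum]
        refine tsum_congr fun i => ?_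
        rw [hA0apply]
        simp [RCLike.inner_apply]
      rw [he]
      refine Summable.tsum_le_of_sum_le ?_ (frame h)
      have := lp.summable_inner (𝕜 := ℝ) (A0 h) (A0 h)
      refine this.congr fun i => ?_
      rw [hA0apply]
      simp [RCLike.inner_apply]
    have hn2 : ‖A0 h‖ ^ 2 ≤ lamSup * ‖h‖ ^ 2 := by
      rw [← real_inner_self_eq_norm_sq]; exact hsum
    calc ‖A0 h‖ = Real.sqrt (‖A0 h‖ ^ 2) := (Real.sqrt_sq (norm_nonneg _)).symm
      _ ≤ Real.sqrt (lamSup * ‖h‖ ^ 2) := Real.sqrt_le_sqrt hn2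
      _ = Real.sqrt lamSup * ‖h‖ := by
          rw [Real.sqrt_mul hlam0, Real.sqrt_sq (norm_nonneg _)]
  let A : H →L[ℝ] Ell2p p := A0.mkContinuous (Real.sqrt lamSup) hA0norm
  have hAapply : ∀ (h : H) (i), (A h : ∀ _ : ℤ × Fin p, ℝ) i = ⟪x i, h⟫_ℝ := fun h i => rfl
  let X : Ell2p p →L[ℝ] H := ContinuousLinearMap.adjoint A
  have hXe : ∀ i, X (e2p p i) = x i := by
    intro i
    refine ext_inner_right ℝ fun h => ?_
    rw [show X (e2p p i) = (ContinuousLinearMap.adjoint A) (e2p p i) from rfl,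
      ContinuousLinearMap.adjoint_inner_left, coordL, hAapply]
  have hAx : ∀ j, A (x j) = C (e2p p j) := by
    intro j
    apply lp.ext; funext i
    rw [hAapply, ← hC i j, ← coordR (C (e2p p j)) i]
  have hAX : ∀ v, A (X v) = C v := by
    intro v
    have h1 : HasSum (fun i => lp.single 2 i (v i)) v :=
      lp.hasSum_single (by norm_num) v
    have h2 : HasSum (fun i => (A.comp X) (lp.single 2 i (v i))) ((A.comp X) v) :=
      h1.mapL _
    have h3 : HasSum (fun i => C (lp.single 2 i (v i))) (C v) := h1.mapL C
    have h4 : ∀ i, (A.comp X) (lp.single 2 i (v i)) = C (lp.single 2 i (v i)) := by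
      intro i
      have hsm : lp.single (E := fun _ : ℤ × Fin p => ℝ) 2 i (v i) = v i • e2p p i := by
        rw [e2p, ← lp.single_smul, smul_eq_mul, mul_one]
      rw [hsm, map_smul, map_smul, ContinuousLinearMap.comp_apply,
        show X (e2p p i) = x i from hXe i, hAx]
    rw [funext h4] at h2
    have := h2.unique h3
    rwa [ContinuousLinearMap.comp_apply] at this
  refine ⟨X, hXe, fun u v => ?_⟩
  rw [show X u = (ContinuousLinearMap.adjoint A) u from rfl,
    ContinuousLinearMap.adjoint_inner_left, hAX]
set_option maxHeartbeats 2000000 in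
/-- **Theorem 2.2(iii).** The blocks `D_{a,a}`, `D_{b,b}`, `D_{a,b}` are all
Toeplitz iff the three time-series partial covariance kernels of the pair `{a,b}` each
depend only on `t - τ`. -/
theorem statement_11
    {H : Type*} [NormedAddCommGroup H] [InnerProductSpace ℝ H] [CompleteSpace H]
    (p : ℕ) (hp : 1 ≤ p) (x : ℤ × Fin p → H)
    (lamInf lamSup : ℝ)
    (hInf : IsGLB (gramQuadSet x) lamInf)
    (hSup : IsLUB (gramQuadSet x) lamSup)
    (hpos : 0 < lamInf)
    (C : Ell2p p →L[ℝ] Ell2p p)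
    (hC : ∀ i j : ℤ × Fin p, ⟪C (e2p p j), e2p p i⟫_ℝ = ⟪x i, x j⟫_ℝ)
    (hCsa : ∀ u v : Ell2p p, ⟪C u, v⟫_ℝ = ⟪u, C v⟫_ℝ)
    (hlo : ∀ v : Ell2p p, lamInf * ‖v‖ ^ 2 ≤ ⟪C v, v⟫_ℝ)
    (hhi : ∀ v : Ell2p p, ⟪C v, v⟫_ℝ ≤ lamSup * ‖v‖ ^ 2)
    (D : Ell2p p →L[ℝ] Ell2p p)
    (hCD : C.comp D = ContinuousLinearMap.id ℝ (Ell2p p))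
    (hDC : D.comp C = ContinuousLinearMap.id ℝ (Ell2p p))
    (a b : Fin p) (hab : a ≠ b)
    (ra rb : ℤ → H)
    (hra : ∀ t : ℤ,
        IsResidual (x '' {k : ℤ × Fin p | k.2 ≠ a ∧ k.2 ≠ b}) (x (t, a)) (ra t))
    (hrb : ∀ t : ℤ,
        IsResidual (x '' {k : ℤ × Fin p | k.2 ≠ a ∧ k.2 ≠ b}) (x (t, b)) (rb t)) :
    ((∀ t τ : ℤ, ⟪D (e2p p (τ, a)), e2p p (t, a)⟫_ℝ =
          ⟪D (e2p p (τ + 1, a)), e2p p (t + 1, a)⟫_ℝ) ∧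
     (∀ t τ : ℤ, ⟪D (e2p p (τ, b)), e2p p (t, b)⟫_ℝ =
          ⟪D (e2p p (τ + 1, b)), e2p p (t + 1, b)⟫_ℝ) ∧
     (∀ t τ : ℤ, ⟪D (e2p p (τ, b)), e2p p (t, a)⟫_ℝ =
          ⟪D (e2p p (τ + 1, b)), e2p p (t + 1, a)⟫_ℝ)) ↔
    ((∀ t τ t' τ' : ℤ, t - τ = t' - τ' → ⟪ra t, ra τ⟫_ℝ = ⟪ra t', ra τ'⟫_ℝ) ∧
     (∀ t τ t' τ' : ℤ, t - τ = t' - τ' → ⟪rb t, rb τ⟫_ℝ = ⟪rb t', rb τ'⟫_ℝ) ∧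
     (∀ t τ t' τ' : ℤ, t - τ = t' - τ' → ⟪ra t, rb τ⟫_ℝ = ⟪ra t', rb τ'⟫_ℝ)) := by
  classical
  -- the synthesis operator
  obtain ⟨X, hXe, hXX⟩ : ∃ X : Ell2p p →L[ℝ] H, (∀ i, X (e2p p i) = x i) ∧
      (∀ u v : Ell2p p, ⟪X u, X v⟫_ℝ = ⟪u, C v⟫_ℝ) := by
    apply exists_synthesis p x lamSup C hC hhi
    have h1 := hlo (e2p p (0, a))
    have h2 := hhi (e2p p (0, a))
    have hn : ‖e2p p (0, a)‖ = 1 := by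
      rw [e2p]
      have := lp.norm_single (p := (2 : ℝ≥0∞)) (E := fun _ : ℤ × Fin p => ℝ) (by norm_num)
        (0, a) (1 : ℝ)
      simpa using this
    rw [hn] at h1 h2
    nlinarith [hpos]
  have hComp1 : ∀ v : Ell2p p, C (D v) = v := fun v => ContinuousLinearMap.ext_iff.mp hCD v
  have hComp2 : ∀ v : Ell2p p, D (C v) = v := fun v => ContinuousLinearMap.ext_iff.mp hDC v
  have hDsa : ∀ u v : Ell2p p, ⟪D u, v⟫_ℝ = ⟪u, D v⟫_ℝ := by
    intro u v
    conv_lhs => rw [← hComp1 v]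
    rw [← hCsa, hComp1]
  have hDflip : ∀ u v : Ell2p p, ⟪D u, v⟫_ℝ = ⟪D v, u⟫_ℝ := by
    intro u v
    rw [hDsa, real_inner_comm]
  -- the dual family y
  have hyy : ∀ i j : ℤ × Fin p,
      ⟪X (D (e2p p i)), X (D (e2p p j))⟫_ℝ = ⟪D (e2p p i), e2p p j⟫_ℝ := by
    intro i j
    rw [hXX, hComp1]
  have hyx : ∀ i j : ℤ × Fin p,
      ⟪X (D (e2p p i)), x j⟫_ℝ = if i = j then 1 else 0 := by
    intro i j
    rw [← hXe j, hXX, ← hCsa, hComp1, hee]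
  have hcoordC : ∀ (v : Ell2p p) (j : ℤ × Fin p), ⟪X v, x j⟫_ℝ = (C v) j := by
    intro v j
    rw [← hXe j, hXX, ← hCsa, coordR]
  have hcoordD : ∀ (v : Ell2p p) (i : ℤ × Fin p), ⟪X v, X (D (e2p p i))⟫_ℝ = v i := by
    intro v i
    rw [hXX, hComp1, coordR]
  set S : Set H := x '' {k : ℤ × Fin p | k.2 ≠ a ∧ k.2 ≠ b} with hSdef
  set y : ℤ × Fin p → H := fun i => X (D (e2p p i)) with hydef
  set ι : ℤ × Bool → ℤ × Fin p := fun q => (q.1, cond q.2 b a) with hιdef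
  set Uf : ℤ × Bool → H := fun q => cond q.2 (rb q.1) (ra q.1) with hUdef
  set Yf : ℤ × Bool → H := fun q => y (ι q) with hYdef
  have hι2 : ∀ q : ℤ × Bool, (ι q).2 = a ∨ (ι q).2 = b := by
    rintro ⟨t, c⟩
    rw [hιdef]
    cases c
    · exact Or.inl rfl
    · exact Or.inr rfl
  have hιinj : Function.Injective ι := by
    rintro ⟨t, c⟩ ⟨s, d⟩ h
    rw [hιdef] at h
    simp only [Prod.mk.injEq] at h
    obtain ⟨h1, h2⟩ := h
    subst h1
    cases c <;> cases d
    · rfl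
    · simp only [Bool.cond_false, Bool.cond_true] at h2
      exact absurd h2 hab
    · simp only [Bool.cond_false, Bool.cond_true] at h2
      exact absurd h2.symm hab
    · rfl
  -- orthogonality to S
  have hyS : ∀ (i : ℤ × Fin p), i.2 = a ∨ i.2 = b → ∀ z ∈ S, ⟪y i, z⟫_ℝ = 0 := by
    rintro i hi z ⟨k, hk, rfl⟩
    rw [hydef]
    rw [hyx, if_neg]
    rintro rfl
    rcases hi with h | h
    · exact hk.1 h
    · exact hk.2 h
  have hyM : ∀ (i : ℤ × Fin p), i.2 = a ∨ i.2 = b →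
      ∀ m ∈ (Submodule.span ℝ S).topologicalClosure, ⟪y i, m⟫_ℝ = 0 :=
    fun i hi => inner_eq_zero_of_closure_span S (y i) (hyS i hi)
  have hrS : ∀ (q : ℤ × Bool), ∀ z ∈ S, ⟪Uf q, z⟫_ℝ = 0 := by
    rintro ⟨t, c⟩ z hz
    cases c
    · simpa only [hUdef, Bool.cond_false] using (hra t).2 z hz
    · simpa only [hUdef, Bool.cond_true] using (hrb t).2 z hz
  have hresid : ∀ q : ℤ × Bool,
      x (ι q) - Uf q ∈ (Submodule.span ℝ S).topologicalClosure := by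
    rintro ⟨t, c⟩
    cases c
    · simpa only [hUdef, hιdef, Bool.cond_false] using (hra t).1
    · simpa only [hUdef, hιdef, Bool.cond_true] using (hrb t).1
  -- biorthogonality
  have hyu : ∀ q q' : ℤ × Bool, ⟪Yf q, Uf q'⟫_ℝ = if q = q' then 1 else 0 := by
    intro q q'
    have hd : Uf q' = x (ι q') - (x (ι q') - Uf q') := by abel
    rw [hYdef, hd, inner_sub_right, hyM (ι q) (hι2 q) _ (hresid q'), sub_zero, hydef, hyx]
    simp only [hιinj.eq_iff]
  have huy : ∀ q q' : ℤ × Bool, ⟪Uf q, Yf q'⟫_ℝ = if q = q' then 1 else 0 := by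
    intro q q'
    rw [← real_inner_comm, hyu]
    simp [eq_comm]
  -- range of X is closed
  have hXXs : ∀ v : Ell2p p, ⟪X v, X v⟫_ℝ = ⟪v, C v⟫_ℝ := fun v => hXX v v
  have hXlow : ∀ v : Ell2p p, Real.sqrt lamInf * ‖v‖ ≤ ‖X v‖ := by
    intro v
    have h1 : lamInf * ‖v‖ ^ 2 ≤ ‖X v‖ ^ 2 := by
      rw [← real_inner_self_eq_norm_sq (X v), hXXs]
      calc lamInf * ‖v‖ ^ 2 ≤ ⟪C v, v⟫_ℝ := hlo v
        _ = ⟪v, C v⟫_ℝ := hCsa v v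
    calc Real.sqrt lamInf * ‖v‖ = Real.sqrt (lamInf * ‖v‖ ^ 2) := by
          rw [Real.sqrt_mul hpos.le, Real.sqrt_sq (norm_nonneg _)]
      _ ≤ Real.sqrt (‖X v‖ ^ 2) := Real.sqrt_le_sqrt h1
      _ = ‖X v‖ := Real.sqrt_sq (norm_nonneg _)
  have hsqrtpos : 0 < Real.sqrt lamInf := Real.sqrt_pos.mpr hpos
  have hanti : AntilipschitzWith ⟨(Real.sqrt lamInf)⁻¹, by positivity⟩ X := by
    apply ContinuousLinearMap.antilipschitz_of_bound
    intro v
    change ‖v‖ ≤ (Real.sqrt lamInf)⁻¹ * ‖X v‖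
    have h1 := hXlow v
    have h2 : ‖v‖ = (Real.sqrt lamInf)⁻¹ * (Real.sqrt lamInf * ‖v‖) := by
      field_simp
    rw [h2]
    exact mul_le_mul_of_nonneg_left h1 (by positivity)
  have hXclosed : IsClosed ((LinearMap.range X.toLinearMap : Submodule ℝ H) : Set H) := by
    have h1 : IsClosed (Set.range X) := hanti.isClosed_range X.uniformContinuous
    have h2 : ((LinearMap.range X.toLinearMap : Submodule ℝ H) : Set H) = Set.range X := by
      ext z
      simp [LinearMap.mem_range]
    rw [h2]
    exact h1
  have hxR : ∀ j, x j ∈ LinearMap.range X.toLinearMap := fun j => ⟨e2p p j, hXe j⟩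
  have hMsubR : (Submodule.span ℝ S).topologicalClosure ≤ LinearMap.range X.toLinearMap := by
    apply Submodule.topologicalClosure_minimal
    · rw [Submodule.span_le]
      rintro z ⟨k, _, rfl⟩
      exact hxR k
    · exact hXclosed
  have huR : ∀ q : ℤ × Bool, Uf q ∈ LinearMap.range X.toLinearMap := by
    intro q
    have h1 := Submodule.sub_mem _ (hxR (ι q)) (hMsubR (hresid q))
    rwa [sub_sub_cancel] at h1
  have hyR : ∀ i : ℤ × Fin p, y i ∈ LinearMap.range X.toLinearMap := fun i => ⟨D (e2p p i), by rw [hydef]; rfl⟩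
  -- zero criteria
  have hz1 : ∀ z : H, z ∈ LinearMap.range X.toLinearMap → (∀ j, ⟪z, x j⟫_ℝ = 0) → z = 0 := by
    rintro z ⟨v, rfl⟩ hv
    have hcv : C v = 0 := by
      apply lp.ext
      funext j
      have h2 := hv j
      rw [ContinuousLinearMap.coe_coe, hcoordC] at h2
      rw [lp.coeFn_zero]
      exact h2
    have hv0 : v = 0 := by rw [← hComp2 v, hcv, map_zero]
    rw [hv0, map_zero]
  have hz2 : ∀ z : H, z ∈ LinearMap.range X.toLinearMap →
      (∀ j : ℤ × Fin p, j.2 ≠ a → j.2 ≠ b → ⟪z, x j⟫_ℝ = 0) →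
      (∀ i : ℤ × Fin p, i.2 = a ∨ i.2 = b → ⟪z, y i⟫_ℝ = 0) → z = 0 := by
    rintro z ⟨v, rfl⟩ hv1 hv2
    have hvz : ∀ i : ℤ × Fin p, i.2 = a ∨ i.2 = b → (v : ∀ _, ℝ) i = 0 := by
      intro i hi
      have := hv2 i hi
      rw [hydef] at this
      rw [← hcoordD v i]
      exact this
    have hCz : ∀ j : ℤ × Fin p, j.2 ≠ a → j.2 ≠ b → (C v : ∀ _, ℝ) j = 0 := by
      intro j h1 h2
      rw [← hcoordC v j]
      exact hv1 j h1 h2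
    have hnorm : ⟪X v, X v⟫_ℝ = 0 := by
      rw [hXXs, lp.inner_eq_tsum]
      have hptws : ∀ i : ℤ × Fin p, ⟪(v : ∀ _, ℝ) i, (C v : ∀ _, ℝ) i⟫_ℝ = 0 := by
        intro i
        by_cases h1 : i.2 = a
        · simp [RCLike.inner_apply, hvz i (Or.inl h1)]
        · by_cases h2 : i.2 = b
          · simp [RCLike.inner_apply, hvz i (Or.inr h2)]
          · simp [RCLike.inner_apply, hCz i h1 h2]
      rw [show (fun i : ℤ × Fin p => ⟪(v : ∀ _, ℝ) i, (C v : ∀ _, ℝ) i⟫_ℝ) = fun _ => (0 : ℝ)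
        from funext hptws, tsum_zero]
    exact inner_self_eq_zero.mp hnorm
  -- span facts
  have hspan1 : ∀ q : ℤ × Bool,
      Yf q ∈ (Submodule.span ℝ (Set.range Uf)).topologicalClosure := by
    intro q
    set N := (Submodule.span ℝ (Set.range Uf)).topologicalClosure with hNdef
    haveI : CompleteSpace N := (Submodule.isClosed_topologicalClosure _).completeSpace_coe
    set m : H := (N.orthogonalProjectionOnto (Yf q) : H) with hmdef
    have hmN : m ∈ N := SetLike.coe_mem _
    have huN : ∀ q', Uf q' ∈ N := fun q' =>
      Submodule.le_topologicalClosure _ (Submodule.subset_span ⟨q', rfl⟩)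
    have hzU : ∀ q', ⟪Yf q - m, Uf q'⟫_ℝ = 0 := fun q' =>
      Submodule.starProjection_inner_eq_zero (K := N) (Yf q) (Uf q') (huN q')
    have hNS : ∀ s ∈ S, ∀ n ∈ N, ⟪n, s⟫_ℝ = 0 := by
      intro s hs n hn
      have h1 : ∀ z ∈ Set.range Uf, ⟪s, z⟫_ℝ = 0 := by
        rintro _ ⟨q', rfl⟩
        rw [real_inner_comm]
        exact hrS q' s hs
      have := inner_eq_zero_of_closure_span (Set.range Uf) s h1 n hn
      rw [real_inner_comm]
      exact this
    have hzS : ∀ s ∈ S, ⟪Yf q - m, s⟫_ℝ = 0 := by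
      intro s hs
      rw [inner_sub_left, hyS (ι q) (hι2 q) s hs, hNS s hs m hmN, sub_zero]
    have hzM : ∀ mm ∈ (Submodule.span ℝ S).topologicalClosure, ⟪Yf q - m, mm⟫_ℝ = 0 :=
      inner_eq_zero_of_closure_span S _ hzS
    have hNR : N ≤ LinearMap.range X.toLinearMap := by
      apply Submodule.topologicalClosure_minimal
      · rw [Submodule.span_le]
        rintro _ ⟨q', rfl⟩
        exact huR q'
      · exact hXclosed
    have hzR : Yf q - m ∈ LinearMap.range X.toLinearMap :=
      Submodule.sub_mem _ (by rw [hYdef]; exact hyR (ι q)) (hNR hmN)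
    have hz0 : Yf q - m = 0 := by
      apply hz1 _ hzR
      rintro ⟨j1, j2⟩
      by_cases hja : j2 = a
      · subst hja
        have hd : x (j1, j2) = ra j1 + (x (j1, j2) - ra j1) := by abel
        have h1 : ⟪Yf q - m, ra j1⟫_ℝ = 0 := by simpa only [hUdef, Bool.cond_false] using hzU (j1, false)
        have h2 : ⟪Yf q - m, x (j1, j2) - ra j1⟫_ℝ = 0 := by
          apply hzM
          simpa only [hιdef, hUdef, Bool.cond_false] using hresid (j1, false)
        rw [hd, inner_add_right, h1, h2, add_zero]
      · by_cases hjb : j2 = b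
        · subst hjb
          have hd : x (j1, j2) = rb j1 + (x (j1, j2) - rb j1) := by abel
          have h1 : ⟪Yf q - m, rb j1⟫_ℝ = 0 := by simpa only [hUdef, Bool.cond_true] using hzU (j1, true)
          have h2 : ⟪Yf q - m, x (j1, j2) - rb j1⟫_ℝ = 0 := by
            apply hzM
            simpa only [hιdef, hUdef, Bool.cond_true] using hresid (j1, true)
          rw [hd, inner_add_right, h1, h2, add_zero]
        · exact hzS (x (j1, j2)) ⟨(j1, j2), ⟨hja, hjb⟩, rfl⟩
    have : Yf q = m := by rwa [sub_eq_zero] at hz0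
    rw [this, hNdef] at *
    exact hmN
  have hspan2 : ∀ q : ℤ × Bool,
      Uf q ∈ (Submodule.span ℝ (Set.range Yf)).topologicalClosure := by
    intro q
    set N := (Submodule.span ℝ (Set.range Yf)).topologicalClosure with hNdef
    haveI : CompleteSpace N := (Submodule.isClosed_topologicalClosure _).completeSpace_coe
    set m : H := (N.orthogonalProjectionOnto (Uf q) : H) with hmdef
    have hmN : m ∈ N := SetLike.coe_mem _
    have hyN : ∀ q', Yf q' ∈ N := fun q' =>
      Submodule.le_topologicalClosure _ (Submodule.subset_span ⟨q', rfl⟩)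
    have hzY : ∀ q', ⟪Uf q - m, Yf q'⟫_ℝ = 0 := fun q' =>
      Submodule.starProjection_inner_eq_zero (K := N) (Uf q) (Yf q') (hyN q')
    have hNS : ∀ s ∈ S, ∀ n ∈ N, ⟪n, s⟫_ℝ = 0 := by
      intro s hs n hn
      have h1 : ∀ z ∈ Set.range Yf, ⟪s, z⟫_ℝ = 0 := by
        rintro _ ⟨q', rfl⟩
        rw [real_inner_comm]
        exact hyS (ι q') (hι2 q') s hs
      have := inner_eq_zero_of_closure_span (Set.range Yf) s h1 n hn
      rw [real_inner_comm]
      exact this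
    have hzS : ∀ s ∈ S, ⟪Uf q - m, s⟫_ℝ = 0 := by
      intro s hs
      rw [inner_sub_left, hrS q s hs, hNS s hs m hmN, sub_zero]
    have hNR : N ≤ LinearMap.range X.toLinearMap := by
      apply Submodule.topologicalClosure_minimal
      · rw [Submodule.span_le]
        rintro _ ⟨q', rfl⟩
        rw [hYdef]
        exact hyR (ι q')
      · exact hXclosed
    have hzR : Uf q - m ∈ LinearMap.range X.toLinearMap :=
      Submodule.sub_mem _ (huR q) (hNR hmN)
    have hz0 : Uf q - m = 0 := by
      apply hz2 _ hzR
      · intro j hj1 hj2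
        exact hzS (x j) ⟨j, ⟨hj1, hj2⟩, rfl⟩
      · rintro ⟨i1, i2⟩ hi
        rcases hi with hi | hi
        · subst hi
          simpa only [hYdef, hιdef, hydef, Bool.cond_false] using hzY (i1, false)
        · subst hi
          simpa only [hYdef, hιdef, hydef, Bool.cond_true] using hzY (i1, true)
    have : Uf q = m := by rwa [sub_eq_zero] at hz0
    rw [this]
    exact hmN
  -- the shift
  set σb : ℤ × Bool ≃ ℤ × Bool :=
    Equiv.prodCongr (Equiv.addRight (1 : ℤ)) (Equiv.refl Bool) with hσdef
  have hσapp : ∀ q : ℤ × Bool, σb q = (q.1 + 1, q.2) := by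
    rintro ⟨t, c⟩
    simp [hσdef, Equiv.prodCongr, Equiv.addRight]
  -- Gram kernels of the two families in terms of the data
  have hYgram : ∀ q q' : ℤ × Bool,
      ⟪Yf q, Yf q'⟫_ℝ = ⟪D (e2p p (ι q)), e2p p (ι q')⟫_ℝ := by
    intro q q'
    rw [hYdef, hydef]
    exact hyy (ι q) (ι q')
  constructor
  · -- D Toeplitz → residual kernels shift-invariant
    rintro ⟨Da, Db, Dab⟩
    have hGramY : ∀ q q' : ℤ × Bool, ⟪Yf (σb q), Yf (σb q')⟫_ℝ = ⟪Yf q, Yf q'⟫_ℝ := by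
      rintro ⟨t, c⟩ ⟨s, d⟩
      rw [hσapp, hσapp, hYgram, hYgram]
      cases c <;> cases d <;> simp only [hιdef, Bool.cond_false, Bool.cond_true]
      · exact (Da s t).symm
      · rw [hDflip, hDflip (e2p p (t, a))]
        exact (Dab t s).symm
      · exact (Dab s t).symm
      · exact (Db s t).symm
    have key := core_dual_shift σb Yf Uf hGramY hyu hspan2
    have key1 : ∀ (c d : Bool) (t τ : ℤ),
        ⟪Uf (t, c), Uf (τ, d)⟫_ℝ = ⟪Uf (t + 1, c), Uf (τ + 1, d)⟫_ℝ := by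
      intro c d t τ
      have := key (t, c) (τ, d)
      rw [hσapp, hσapp] at this
      exact this.symm
    refine ⟨?_, ?_, ?_⟩
    · apply shift_iterate
      intro t τ
      simpa only [hUdef, Bool.cond_false] using key1 false false t τ
    · apply shift_iterate
      intro t τ
      simpa only [hUdef, Bool.cond_true] using key1 true true t τ
    · apply shift_iterate
      intro t τ
      simpa only [hUdef, Bool.cond_false, Bool.cond_true] using key1 false true t τ
  · -- residual kernels shift-invariant → D Toeplitz
    rintro ⟨Ha, Hb, Hab⟩
    have hGramU : ∀ q q' : ℤ × Bool, ⟪Uf (σb q), Uf (σb q')⟫_ℝ = ⟪Uf q, Uf q'⟫_ℝ := by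
      rintro ⟨t, c⟩ ⟨s, d⟩
      rw [hσapp, hσapp]
      cases c <;> cases d <;> simp only [hUdef, Bool.cond_false, Bool.cond_true]
      · exact Ha (t + 1) (s + 1) t s (by ring)
      · exact Hab (t + 1) (s + 1) t s (by ring)
      · rw [real_inner_comm (ra (s + 1)) (rb (t + 1)), real_inner_comm (ra s) (rb t)]
        exact Hab (s + 1) (t + 1) s t (by ring)
      · exact Hb (t + 1) (s + 1) t s (by ring)
    have key := core_dual_shift σb Uf Yf hGramU huy hspan1
    have key1 : ∀ (c d : Bool) (t τ : ℤ),
        ⟪Yf (t + 1, c), Yf (τ + 1, d)⟫_ℝ = ⟪Yf (t, c), Yf (τ, d)⟫_ℝ := by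
      intro c d t τ
      have := key (t, c) (τ, d)
      rw [hσapp, hσapp] at this
      exact this
    refine ⟨?_, ?_, ?_⟩
    · intro t τ
      have := key1 false false τ t
      rw [hYgram, hYgram] at this
      simp only [hιdef, Bool.cond_false, Bool.cond_true] at this
      exact this.symm
    · intro t τ
      have := key1 true true τ t
      rw [hYgram, hYgram] at this
      simp only [hιdef, Bool.cond_false, Bool.cond_true] at this
      exact this.symm
    · intro t τ
      have := key1 true false τ t
      rw [hYgram, hYgram] at this
      simp only [hιdef, Bool.cond_false, Bool.cond_true] at this
      exact this.symm
end
end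

section
/- (Corollary 2.1, subgraph identity.) Under Assumption 2.1, let S ⊆ {1,…,p} be nonempty with complement S′, and let P_{S′} be the orthogonal projection onto the closed linear span of {x_{(s,c)} : s ∈ ℤ, c ∈ S′}. Then the Gram operator of the residual family {x_{(t,a)} − P_{S′} x_{(t,a)} : t ∈ ℤ, a ∈ S}, regarded as an operator on the ℓ²-space indexed by ℤ × S, equals the inverse of the block operator (D_{a,b})_{a,b ∈ S}. In particular, if moreover D_{a,b} is Toeplitz for all a, b ∈ S, then all the residual inner products ⟨x_{(t,a)} − P_{S′} x_{(t,a)}, x_{(τ,b)} − P_{S′} x_{(τ,b)}⟩ with a, b ∈ S depend only on t − τ. -/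
open scoped InnerProductSpace

noncomputable section

/-- The `ℓ²` space indexed by `ℤ × S` for a subset `S` of the components. -/
abbrev Ell2S (p : ℕ) (S : Set (Fin p)) : Type := lp (fun _ : ℤ × {c : Fin p // c ∈ S} => ℝ) 2

noncomputable def eS (p : ℕ) (S : Set (Fin p)) (i : ℤ × {c : Fin p // c ∈ S}) :
    Ell2S p S := lp.single 2 i 1

/- ===================== auxiliary development ===================== -/

set_option linter.unusedSectionVars false
set_option maxHeartbeats 1000000

open scoped ENNReal

section Aux

lemma st12_toReal_two : (2 : ℝ≥0∞).toReal = 2 := by norm_num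

lemma st12_rpow_norm_two (a : ℝ) : ‖a‖ ^ (2 : ℝ≥0∞).toReal = a ^ 2 := by
  rw [st12_toReal_two, show (2:ℝ) = ((2:ℕ):ℝ) by norm_num, Real.rpow_natCast,
    Real.norm_eq_abs, sq_abs]

variable {α : Type*} [DecidableEq α]

abbrev St12E2 (α : Type*) : Type _ := lp (fun _ : α => ℝ) 2

lemma st12_coord (u : St12E2 α) (k : α) : ⟪u, lp.single 2 k 1⟫_ℝ = u k := by
  rw [lp.inner_single_right]
  simp

lemma st12_lp_ext {u v : St12E2 α}
    (h : ∀ k, ⟪u, lp.single 2 k 1⟫_ℝ = ⟪v, lp.single 2 k 1⟫_ℝ) : u = v := by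
  ext k
  have := h k
  rwa [st12_coord, st12_coord] at this

lemma st12_clm_ext {X : Type*} [NormedAddCommGroup X] [NormedSpace ℝ X]
    (F₁ F₂ : St12E2 α →L[ℝ] X)
    (h : ∀ j, F₁ (lp.single 2 j 1) = F₂ (lp.single 2 j 1)) : F₁ = F₂ := by
  ext f
  have hs := lp.hasSum_single (E := fun _ : α => ℝ) (p := 2) (by norm_num) f
  refine (hs.mapL F₁).unique ?_
  convert hs.mapL F₂ using 2 with j
  have h1 : lp.single (E := fun _ : α => ℝ) 2 j (f j) = (f j) • lp.single 2 j 1 := by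
    rw [← lp.single_smul]
    norm_num
  rw [h1, map_smul, map_smul, h j]

/-- The shift (reindexing) isometry on `lp 2` along an equivalence. -/
def st12Shift (σ : α ≃ α) : St12E2 α →ₗᵢ[ℝ] St12E2 α where
  toFun u := ⟨fun m => u (σ.symm m), by
    apply memℓp_gen
    show Summable ((fun k => ‖u k‖ ^ (2:ℝ≥0∞).toReal) ∘ σ.symm)
    exact (σ.symm.summable_iff).2
      ((memℓp_gen_iff (by rw [st12_toReal_two]; norm_num)).1 (lp.memℓp u))⟩
  map_add' u v := by
    ext m
    show (u + v) (σ.symm m) = _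
    rw [lp.coeFn_add]
    rfl
  map_smul' c u := by
    ext m
    show (c • u) (σ.symm m) = _
    rw [lp.coeFn_smul]
    rfl
  norm_map' u := by
    set f : St12E2 α := ⟨fun m => u (σ.symm m), by
      apply memℓp_gen
      show Summable ((fun k => ‖u k‖ ^ (2:ℝ≥0∞).toReal) ∘ σ.symm)
      exact (σ.symm.summable_iff).2
        ((memℓp_gen_iff (by rw [st12_toReal_two]; norm_num)).1 (lp.memℓp u))⟩
    show ‖f‖ = ‖u‖
    have h1 : ‖f‖ ^ (2:ℝ≥0∞).toReal = ∑' m, ‖f m‖ ^ (2:ℝ≥0∞).toReal :=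
      lp.norm_rpow_eq_tsum (by rw [st12_toReal_two]; norm_num) f
    have h2 : ‖u‖ ^ (2:ℝ≥0∞).toReal = ∑' k, ‖u k‖ ^ (2:ℝ≥0∞).toReal :=
      lp.norm_rpow_eq_tsum (by rw [st12_toReal_two]; norm_num) u
    have h3 : ∑' m, ‖f m‖ ^ (2:ℝ≥0∞).toReal = ∑' k, ‖u k‖ ^ (2:ℝ≥0∞).toReal :=
      Equiv.tsum_eq σ.symm (fun k => ‖u k‖ ^ (2:ℝ≥0∞).toReal)
    have h5 : ‖f‖ ^ (2:ℝ≥0∞).toReal = ‖u‖ ^ (2:ℝ≥0∞).toReal := by rw [h1, h2, ← h3]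
    have h6 : ‖f‖ ^ (2:ℕ) = ‖u‖ ^ (2:ℕ) := by
      rwa [st12_toReal_two, show ((2:ℝ)) = ((2:ℕ):ℝ) by norm_num, Real.rpow_natCast,
        Real.rpow_natCast] at h5
    calc ‖f‖ = Real.sqrt (‖f‖ ^ 2) := (Real.sqrt_sq (norm_nonneg f)).symm
    _ = Real.sqrt (‖u‖ ^ 2) := by rw [h6]
    _ = ‖u‖ := Real.sqrt_sq (norm_nonneg u)

lemma st12Shift_apply (σ : α ≃ α) (u : St12E2 α) (m : α) :
    (st12Shift σ u : ∀ _ : α, ℝ) m = u (σ.symm m) := rfl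

lemma st12Shift_single (σ : α ≃ α) (k : α) :
    st12Shift σ (lp.single 2 k 1) = lp.single 2 (σ k) 1 := by
  ext m
  rw [st12Shift_apply]
  by_cases hm : m = σ k
  · subst hm
    rw [Equiv.symm_apply_apply, lp.single_apply_self, lp.single_apply_self]
  · rw [lp.single_apply_ne _ _ _ (fun h => hm (by rw [← h, Equiv.apply_symm_apply])),
      lp.single_apply_ne _ _ _ hm]

end Aux

section AuxH

variable {H : Type*} [NormedAddCommGroup H] [InnerProductSpace ℝ H] {p : ℕ}

lemma st12_finsupp_bound (x : ℤ × Fin p → H) (lamSup : ℝ)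
    (hSup : IsLUB (gramQuadSet x) lamSup) (v : (ℤ × Fin p) →₀ ℝ) :
    ‖∑ i ∈ v.support, v i • x i‖ ^ 2 ≤ lamSup * ∑ i ∈ v.support, (v i) ^ 2 := by
  classical
  set s := ∑ i ∈ v.support, (v i) ^ 2 with hs
  have hs0 : 0 ≤ s := Finset.sum_nonneg fun i _ => sq_nonneg _
  rcases eq_or_lt_of_le hs0 with h0 | hpos
  · have hz : ∀ i ∈ v.support, v i = 0 := by
      intro i hi
      have := (Finset.sum_eq_zero_iff_of_nonneg (fun i _ => sq_nonneg (v i))).1 h0.symm i hi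
      exact pow_eq_zero_iff (by norm_num) |>.1 this
    have : ∑ i ∈ v.support, v i • x i = 0 :=
      Finset.sum_eq_zero fun i hi => by rw [hz i hi, zero_smul]
    rw [this]
    simp [← h0]
  · set c : ℝ := (Real.sqrt s)⁻¹ with hc
    have hsq : Real.sqrt s > 0 := Real.sqrt_pos.2 hpos
    have hc0 : c ≠ 0 := inv_ne_zero hsq.ne'
    set w : (ℤ × Fin p) →₀ ℝ := c • v with hw
    have hwsupp : w.support = v.support := Finsupp.support_smul_eq hc0
    have hwsum : ∑ i ∈ w.support, (w i) ^ 2 = 1 := by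
      rw [hwsupp]
      have : ∀ i ∈ v.support, (w i) ^ 2 = c ^ 2 * (v i) ^ 2 := by
        intro i _
        rw [hw]
        simp [Finsupp.smul_apply, mul_pow, smul_eq_mul]
      rw [Finset.sum_congr rfl this, ← Finset.mul_sum, ← hs, hc, ← Real.sqrt_inv,
        Real.sq_sqrt (by positivity)]
      field_simp
    have hmem : ‖∑ i ∈ w.support, w i • x i‖ ^ 2 ∈ gramQuadSet x := ⟨w, hwsum, rfl⟩
    have hle := hSup.1 hmem
    have hsum : ∑ i ∈ w.support, w i • x i = c • ∑ i ∈ v.support, v i • x i := by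
      rw [hwsupp, Finset.smul_sum]
      refine Finset.sum_congr rfl fun i _ => ?_
      rw [hw]
      simp [Finsupp.smul_apply, smul_smul, smul_eq_mul]
    rw [hsum, norm_smul] at hle
    have hnorm : ‖c‖ ^ 2 = s⁻¹ := by
      rw [Real.norm_eq_abs, sq_abs, hc, ← Real.sqrt_inv, Real.sq_sqrt (by positivity)]
    rw [mul_pow, hnorm] at hle
    have : ‖∑ i ∈ v.support, v i • x i‖ ^ 2 ≤ lamSup * s := by
      rw [inv_mul_le_iff₀ hpos] at hle
      linarith [hle]
    linarith [this]

lemma st12_finset_bound (x : ℤ × Fin p → H) (lamSup : ℝ)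
    (hSup : IsLUB (gramQuadSet x) lamSup)
    (F : Finset (ℤ × Fin p)) (c : ℤ × Fin p → ℝ) :
    ‖∑ i ∈ F, c i • x i‖ ^ 2 ≤ lamSup * ∑ i ∈ F, (c i) ^ 2 := by
  classical
  set v : (ℤ × Fin p) →₀ ℝ := Finsupp.onFinset F (fun i => if i ∈ F then c i else 0)
    (fun i hi => by by_contra h; exact hi (by simp [h])) with hv
  have hsupp : v.support ⊆ F := Finsupp.support_onFinset_subset
  have hvF : ∀ i ∈ F, v i = c i := fun i hi => by simp [hv, hi]
  have h1 : ∑ i ∈ F, c i • x i = ∑ i ∈ v.support, v i • x i := by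
    rw [← Finset.sum_congr rfl (fun i hi => by rw [hvF i hi] : ∀ i ∈ F, v i • x i = c i • x i)]
    refine (Finset.sum_subset hsupp fun i _ hi => ?_).symm
    rw [Finsupp.notMem_support_iff.1 hi, zero_smul]
  have h2 : ∑ i ∈ F, (c i) ^ 2 = ∑ i ∈ v.support, (v i) ^ 2 := by
    rw [← Finset.sum_congr rfl (fun i hi => by rw [hvF i hi] : ∀ i ∈ F, (v i) ^ 2 = (c i) ^ 2)]
    refine (Finset.sum_subset hsupp fun i _ hi => ?_).symm
    rw [Finsupp.notMem_support_iff.1 hi]; ring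
  rw [h1, h2]
  exact st12_finsupp_bound x lamSup hSup v

lemma st12_lamSup_nonneg (x : ℤ × Fin p → H) (lamSup : ℝ) (hp : 1 ≤ p)
    (hSup : IsLUB (gramQuadSet x) lamSup) : 0 ≤ lamSup := by
  classical
  set i0 : ℤ × Fin p := (0, ⟨0, hp⟩)
  set v : (ℤ × Fin p) →₀ ℝ := Finsupp.single i0 1
  have hsupp : v.support = {i0} := Finsupp.support_single_ne_zero i0 one_ne_zero
  have hmem : ‖x i0‖ ^ 2 ∈ gramQuadSet x := by
    refine ⟨v, ?_, ?_⟩ <;>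
      rw [hsupp, Finset.sum_singleton] <;> simp [v, Finsupp.single_eq_same]
  exact le_trans (sq_nonneg _) (hSup.1 hmem)

lemma st12_bessel (x : ℤ × Fin p → H) (lamSup : ℝ)
    (hSup : IsLUB (gramQuadSet x) lamSup) (hl0 : 0 ≤ lamSup) (h : H)
    (F : Finset (ℤ × Fin p)) :
    ∑ m ∈ F, ⟪x m, h⟫_ℝ ^ 2 ≤ lamSup * ‖h‖ ^ 2 := by
  classical
  set c : ℤ × Fin p → ℝ := fun m => ⟪x m, h⟫_ℝ with hcdef
  set s := ∑ m ∈ F, (c m) ^ 2 with hs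
  have hs0 : 0 ≤ s := Finset.sum_nonneg fun i _ => sq_nonneg _
  have key : s = ⟪∑ m ∈ F, c m • x m, h⟫_ℝ := by
    rw [sum_inner]
    refine Finset.sum_congr rfl fun m _ => ?_
    rw [real_inner_smul_left]; ring
  have hcs : s ≤ ‖∑ m ∈ F, c m • x m‖ * ‖h‖ := key.le.trans (real_inner_le_norm _ _)
  have hb := st12_finset_bound x lamSup hSup F c
  rcases eq_or_lt_of_le hs0 with h0 | hpos
  · rw [← h0]
    positivity
  · have h1 : s ^ 2 ≤ (lamSup * s) * ‖h‖ ^ 2 := by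
      have := mul_le_mul hcs hcs hs0 (by positivity)
      nlinarith [norm_nonneg (∑ m ∈ F, c m • x m), norm_nonneg h]
    nlinarith [h1, hpos, sq_nonneg (‖h‖)]

lemma st12_Amem (x : ℤ × Fin p → H) (lamSup : ℝ)
    (hbessel : ∀ (h : H) (F : Finset (ℤ × Fin p)),
      ∑ m ∈ F, ⟪x m, h⟫_ℝ ^ 2 ≤ lamSup * ‖h‖ ^ 2)
    (h : H) : Memℓp (fun m => ⟪x m, h⟫_ℝ) 2 := by
  refine memℓp_gen' (C := lamSup * ‖h‖ ^ 2) ?_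
  intro F
  calc ∑ m ∈ F, ‖⟪x m, h⟫_ℝ‖ ^ (2:ℝ≥0∞).toReal = ∑ m ∈ F, ⟪x m, h⟫_ℝ ^ 2 :=
        Finset.sum_congr rfl fun m _ => st12_rpow_norm_two _
  _ ≤ lamSup * ‖h‖ ^ 2 := hbessel h F

/-- The "analysis operator" `h ↦ (⟪x m, h⟫)ₘ`. -/
def st12A (x : ℤ × Fin p → H) (lamSup : ℝ)
    (hbessel : ∀ (h : H) (F : Finset (ℤ × Fin p)),
      ∑ m ∈ F, ⟪x m, h⟫_ℝ ^ 2 ≤ lamSup * ‖h‖ ^ 2)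
    (hl0 : 0 ≤ lamSup) : H →L[ℝ] Ell2p p :=
  LinearMap.mkContinuous
    { toFun := fun h => ⟨fun m => ⟪x m, h⟫_ℝ, st12_Amem x lamSup hbessel h⟩
      map_add' := fun h₁ h₂ => by
        ext m
        simp [inner_add_right, lp.coeFn_add]; rfl
      map_smul' := fun c h => by
        ext m
        simp [inner_smul_right, lp.coeFn_smul] }
    (Real.sqrt lamSup) (by
  intro h
  set f : Ell2p p := ⟨fun m => ⟪x m, h⟫_ℝ, st12_Amem x lamSup hbessel h⟩ with hf
  show ‖f‖ ≤ Real.sqrt lamSup * ‖h‖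
  have hnorm : ‖f‖ ^ (2:ℝ≥0∞).toReal = ∑' m, ‖f m‖ ^ (2:ℝ≥0∞).toReal :=
    lp.norm_rpow_eq_tsum (by rw [st12_toReal_two]; norm_num) f
  have hsum : Summable fun m => ‖f m‖ ^ (2:ℝ≥0∞).toReal :=
    (memℓp_gen_iff (by rw [st12_toReal_two]; norm_num)).1 (lp.memℓp f)
  have hle : ∑' m, ‖f m‖ ^ (2:ℝ≥0∞).toReal ≤ lamSup * ‖h‖ ^ 2 := by
    refine Summable.tsum_le_of_sum_le hsum fun F => ?_
    calc ∑ m ∈ F, ‖f m‖ ^ (2:ℝ≥0∞).toReal = ∑ m ∈ F, ⟪x m, h⟫_ℝ ^ 2 :=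
        Finset.sum_congr rfl fun m _ => st12_rpow_norm_two _
    _ ≤ lamSup * ‖h‖ ^ 2 := hbessel h F
  have h2 : ‖f‖ ^ 2 ≤ lamSup * ‖h‖ ^ 2 := by
    have := hnorm ▸ hle
    rwa [st12_toReal_two, show ((2:ℝ)) = ((2:ℕ):ℝ) by norm_num, Real.rpow_natCast] at this
  calc ‖f‖ = Real.sqrt (‖f‖ ^ 2) := (Real.sqrt_sq (norm_nonneg f)).symm
  _ ≤ Real.sqrt (lamSup * ‖h‖ ^ 2) := Real.sqrt_le_sqrt h2
  _ = Real.sqrt lamSup * ‖h‖ := by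
      rw [Real.sqrt_mul hl0, Real.sqrt_sq (norm_nonneg h)])

lemma st12A_apply (x : ℤ × Fin p → H) (lamSup : ℝ) (hb) (hl0) (h : H) (m : ℤ × Fin p) :
    (st12A x lamSup hb hl0 h : ∀ _ : ℤ × Fin p, ℝ) m = ⟪x m, h⟫_ℝ := rfl

end AuxH

section AuxIota

variable {p : ℕ} (S : Set (Fin p))

def st12emb (k : ℤ × {c : Fin p // c ∈ S}) : ℤ × Fin p := (k.1, k.2.1)

lemma st12emb_inj : Function.Injective (st12emb S) := by
  rintro ⟨t₁, a₁⟩ ⟨t₂, a₂⟩ h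
  simp only [st12emb, Prod.mk.injEq] at h
  exact Prod.ext h.1 (Subtype.ext h.2)

lemma st12emb_range (m : ℤ × Fin p) : m ∈ Set.range (st12emb S) ↔ m.2 ∈ S := by
  constructor
  · rintro ⟨k, rfl⟩; exact k.2.2
  · intro h; exact ⟨(m.1, ⟨m.2, h⟩), rfl⟩

open Classical in
def st12iotaFun (u : Ell2S p S) : ∀ _ : ℤ × Fin p, ℝ :=
  fun m => if h : m.2 ∈ S then u (m.1, ⟨m.2, h⟩) else 0

lemma st12iotaFun_comp (u : Ell2S p S) (k : ℤ × {c : Fin p // c ∈ S}) :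
    st12iotaFun S u (st12emb S k) = u k := by
  rcases k with ⟨t, ⟨a, ha⟩⟩
  simp [st12iotaFun, st12emb, ha]

lemma st12iotaFun_vanish (u : Ell2S p S) (m : ℤ × Fin p)
    (hm : m ∉ Set.range (st12emb S)) : st12iotaFun S u m = 0 := by
  rw [st12emb_range] at hm
  simp only [st12iotaFun, dif_neg hm]

lemma st12iotaFun_mem (u : Ell2S p S) : Memℓp (st12iotaFun S u) 2 := by
  apply memℓp_gen
  have hv : ∀ m ∉ Set.range (st12emb S), ‖st12iotaFun S u m‖ ^ (2:ℝ≥0∞).toReal = 0 := by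
    intro m hm
    rw [st12iotaFun_vanish S u m hm, norm_zero,
      Real.zero_rpow (by rw [st12_toReal_two]; norm_num)]
  refine ((st12emb_inj S).summable_iff hv).1 ?_
  have heq : (fun k => ‖st12iotaFun S u (st12emb S k)‖ ^ (2:ℝ≥0∞).toReal)
      = fun k => ‖u k‖ ^ (2:ℝ≥0∞).toReal := by
    funext k; rw [st12iotaFun_comp]
  show Summable ((fun m => ‖st12iotaFun S u m‖ ^ (2:ℝ≥0∞).toReal) ∘ (st12emb S))
  simp only [Function.comp_def, heq]
  exact (memℓp_gen_iff (by rw [st12_toReal_two]; norm_num)).1 (lp.memℓp u)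

/-- The extension-by-zero isometry `ℓ²(ℤ × S) → ℓ²(ℤ × Fin p)`. -/
def st12iota : Ell2S p S →ₗᵢ[ℝ] Ell2p p where
  toFun u := ⟨st12iotaFun S u, st12iotaFun_mem S u⟩
  map_add' u v := by
    ext m
    show st12iotaFun S (u + v) m = st12iotaFun S u m + st12iotaFun S v m
    simp only [st12iotaFun]
    split_ifs with h
    · rw [lp.coeFn_add]; rfl
    · ring
  map_smul' c u := by
    ext m
    show st12iotaFun S (c • u) m = c • st12iotaFun S u m
    simp only [st12iotaFun]
    split_ifs with h
    · rw [lp.coeFn_smul]; rfl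
    · simp
  norm_map' u := by
    set f : Ell2p p := ⟨st12iotaFun S u, st12iotaFun_mem S u⟩
    have h1 : ‖f‖ ^ (2:ℝ≥0∞).toReal = ∑' m, ‖f m‖ ^ (2:ℝ≥0∞).toReal :=
      lp.norm_rpow_eq_tsum (by rw [st12_toReal_two]; norm_num) f
    have h2 : ‖u‖ ^ (2:ℝ≥0∞).toReal = ∑' k, ‖u k‖ ^ (2:ℝ≥0∞).toReal :=
      lp.norm_rpow_eq_tsum (by rw [st12_toReal_two]; norm_num) u
    have h3 : ∑' k, ‖f (st12emb S k)‖ ^ (2:ℝ≥0∞).toReal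
        = ∑' m, ‖f m‖ ^ (2:ℝ≥0∞).toReal := by
      refine Function.Injective.tsum_eq (st12emb_inj S)
        (f := fun m => ‖f m‖ ^ (2:ℝ≥0∞).toReal) ?_
      refine Function.support_subset_iff'.2 fun m hm => ?_
      rw [show f m = (0:ℝ) from st12iotaFun_vanish S u m hm, norm_zero,
        Real.zero_rpow (by rw [st12_toReal_two]; norm_num)]
    have h4 : ∀ k, ‖f (st12emb S k)‖ ^ (2:ℝ≥0∞).toReal = ‖u k‖ ^ (2:ℝ≥0∞).toReal := by
      intro k
      rw [show f (st12emb S k) = u k from st12iotaFun_comp S u k]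
    have h5 : ‖f‖ ^ (2:ℝ≥0∞).toReal = ‖u‖ ^ (2:ℝ≥0∞).toReal := by
      rw [h1, h2, ← h3]
      exact tsum_congr h4
    have h6 : ‖f‖ ^ (2:ℕ) = ‖u‖ ^ (2:ℕ) := by
      rwa [st12_toReal_two, show ((2:ℝ)) = ((2:ℕ):ℝ) by norm_num, Real.rpow_natCast,
        Real.rpow_natCast] at h5
    calc ‖f‖ = Real.sqrt (‖f‖ ^ 2) := (Real.sqrt_sq (norm_nonneg f)).symm
    _ = Real.sqrt (‖u‖ ^ 2) := by rw [h6]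
    _ = ‖u‖ := Real.sqrt_sq (norm_nonneg u)

lemma st12iota_apply (u : Ell2S p S) (m : ℤ × Fin p) :
    ((st12iota S u : Ell2p p) : ∀ _ : ℤ × Fin p, ℝ) m = st12iotaFun S u m := rfl

lemma st12iota_single (k : ℤ × {c : Fin p // c ∈ S}) :
    st12iota S (lp.single 2 k 1) = lp.single 2 (st12emb S k) 1 := by
  ext m
  rw [st12iota_apply]
  by_cases hm : m ∈ Set.range (st12emb S)
  · obtain ⟨k', rfl⟩ := hm
    rw [st12iotaFun_comp]
    by_cases hk : k' = k
    · subst hk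
      rw [lp.single_apply_self, lp.single_apply_self]
    · rw [lp.single_apply_ne _ _ _ hk,
        lp.single_apply_ne _ _ _ (fun h => hk ((st12emb_inj S) h))]
  · rw [st12iotaFun_vanish S _ m hm, lp.single_apply_ne]
    intro h
    exact hm ⟨k, h.symm⟩

end AuxIota

/- ===================== end auxiliary development ===================== -/

/-- **Corollary 2.1.** The Gram operator of the residual family of a subset
`S` of components is the inverse of the block operator `(D_{a,b})_{a,b ∈ S}`; in particular,
if all of these blocks are Toeplitz then the residual inner products depend only on `t - τ`. -/
theorem statement_12
    {H : Type*} [NormedAddCommGroup H] [InnerProductSpace ℝ H] [CompleteSpace H]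
    (p : ℕ) (hp : 1 ≤ p) (x : ℤ × Fin p → H)
    (lamInf lamSup : ℝ)
    (hInf : IsGLB (gramQuadSet x) lamInf)
    (hSup : IsLUB (gramQuadSet x) lamSup)
    (hpos : 0 < lamInf)
    (C : Ell2p p →L[ℝ] Ell2p p)
    (hC : ∀ i j : ℤ × Fin p, ⟪C (e2p p j), e2p p i⟫_ℝ = ⟪x i, x j⟫_ℝ)
    (hCsa : ∀ u v : Ell2p p, ⟪C u, v⟫_ℝ = ⟪u, C v⟫_ℝ)
    (hlo : ∀ v : Ell2p p, lamInf * ‖v‖ ^ 2 ≤ ⟪C v, v⟫_ℝ)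
    (hhi : ∀ v : Ell2p p, ⟪C v, v⟫_ℝ ≤ lamSup * ‖v‖ ^ 2)
    (D : Ell2p p →L[ℝ] Ell2p p)
    (hCD : C.comp D = ContinuousLinearMap.id ℝ (Ell2p p))
    (hDC : D.comp C = ContinuousLinearMap.id ℝ (Ell2p p))
    (S : Set (Fin p)) (hS : S.Nonempty)
    (r : ℤ × Fin p → H)
    (hr : ∀ i : ℤ × Fin p, i.2 ∈ S →
        IsResidual (x '' {k : ℤ × Fin p | k.2 ∉ S}) (x i) (r i))
    (G T : Ell2S p S →L[ℝ] Ell2S p S)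
    (hG : ∀ i j : ℤ × {c : Fin p // c ∈ S},
        ⟪G (eS p S j), eS p S i⟫_ℝ = ⟪r (i.1, i.2.1), r (j.1, j.2.1)⟫_ℝ)
    (hT : ∀ i j : ℤ × {c : Fin p // c ∈ S},
        ⟪T (eS p S j), eS p S i⟫_ℝ = ⟪D (e2p p (j.1, j.2.1)), e2p p (i.1, i.2.1)⟫_ℝ) :
    T.comp G = ContinuousLinearMap.id ℝ (Ell2S p S) ∧
    G.comp T = ContinuousLinearMap.id ℝ (Ell2S p S) ∧
    ((∀ a ∈ S, ∀ b ∈ S, ∀ t τ : ℤ,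
        ⟪D (e2p p (τ, b)), e2p p (t, a)⟫_ℝ = ⟪D (e2p p (τ + 1, b)), e2p p (t + 1, a)⟫_ℝ) →
      ∀ a ∈ S, ∀ b ∈ S, ∀ t τ t' τ' : ℤ, t - τ = t' - τ' →
        ⟪r (t, a), r (τ, b)⟫_ℝ = ⟪r (t', a), r (τ', b)⟫_ℝ) := by
  
  -- basic setup
  have hl0 : 0 ≤ lamSup := st12_lamSup_nonneg x lamSup hp hSup
  have hbb : ∀ (h : H) (F : Finset (ℤ × Fin p)),
      ∑ m ∈ F, ⟪x m, h⟫_ℝ ^ 2 ≤ lamSup * ‖h‖ ^ 2 := st12_bessel x lamSup hSup hl0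
  set A : H →L[ℝ] Ell2p p := st12A x lamSup hbb hl0 with hA
  have hAap : ∀ (h : H) (m : ℤ × Fin p), (A h : ∀ _ : ℤ × Fin p, ℝ) m = ⟪x m, h⟫_ℝ :=
    fun h m => rfl
  have heS : ∀ k : ℤ × {c : Fin p // c ∈ S},
      (lp.single 2 k 1 : Ell2S p S) = eS p S k := fun _ => rfl
  have he2 : ∀ m : ℤ × Fin p, (lp.single 2 m 1 : Ell2p p) = e2p p m := fun _ => rfl
  have hcP : ∀ (u : Ell2p p) (m : ℤ × Fin p), ⟪u, e2p p m⟫_ℝ = u m :=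
    fun u m => st12_coord u m
  have hcS : ∀ (u : Ell2S p S) (k : ℤ × {c : Fin p // c ∈ S}), ⟪u, eS p S k⟫_ℝ = u k :=
    fun u k => st12_coord u k
  have hCD' : ∀ v, C (D v) = v := fun v => by
    have := ContinuousLinearMap.ext_iff.1 hCD v
    simpa using this
  have hDC' : ∀ v, D (C v) = v := fun v => by
    have := ContinuousLinearMap.ext_iff.1 hDC v
    simpa using this
  have hDsym : ∀ u v : Ell2p p, ⟪D u, v⟫_ℝ = ⟪u, D v⟫_ℝ := by
    intro u v
    calc ⟪D u, v⟫_ℝ = ⟪D u, C (D v)⟫_ℝ := by rw [hCD']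
    _ = ⟪C (D u), D v⟫_ℝ := (hCsa (D u) (D v)).symm
    _ = ⟪u, D v⟫_ℝ := by rw [hCD']
  -- orthogonality of residuals to the closed span of the off-S family
  have horth : ∀ i : ℤ × Fin p, i.2 ∈ S → ∀ w ∈ (Submodule.span ℝ
      (x '' {k : ℤ × Fin p | k.2 ∉ S})).topologicalClosure, ⟪r i, w⟫_ℝ = 0 := by
    intro i hi w hw
    have h2 := (hr i hi).2
    have hsub : Submodule.span ℝ (x '' {k : ℤ × Fin p | k.2 ∉ S})
        ≤ LinearMap.ker (innerSL ℝ (r i) : H →ₗ[ℝ] ℝ) := by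
      rw [Submodule.span_le]
      intro z hz
      simp only [SetLike.mem_coe, LinearMap.mem_ker]
      simpa using h2 z hz
    have := Submodule.topologicalClosure_minimal _ hsub
      (ContinuousLinearMap.isClosed_ker _) hw
    simpa using this
  -- A of the residual equals the extension of the column of G
  have hgA : ∀ i : ℤ × {c : Fin p // c ∈ S},
      (st12iota S (G (eS p S i)) : Ell2p p) = A (r (st12emb S i)) := by
    intro i
    ext m
    rw [st12iota_apply, hAap]
    by_cases hm : m.2 ∈ S
    · have hrw : st12iotaFun S (G (eS p S i)) m = (G (eS p S i)) (m.1, ⟨m.2, hm⟩) := by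
        simp only [st12iotaFun, dif_pos hm]
      rw [hrw, ← hcS (G (eS p S i)) (m.1, ⟨m.2, hm⟩), hG (m.1, ⟨m.2, hm⟩) i]
      have hd : ⟪x m - r m, r (st12emb S i)⟫_ℝ = 0 := by
        rw [real_inner_comm]
        exact horth (st12emb S i) i.2.2 _ ((hr m hm).1)
      rw [inner_sub_left] at hd
      have hd' : ⟪x m, r (st12emb S i)⟫_ℝ - ⟪r m, r (st12emb S i)⟫_ℝ = 0 := hd
      show ⟪r m, r (st12emb S i)⟫_ℝ = ⟪x m, r (st12emb S i)⟫_ℝ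
      linarith [hd']
    · rw [st12iotaFun_vanish S _ m (fun hc => hm ((st12emb_range S m).1 hc))]
      have hxm : x m ∈ (Submodule.span ℝ
          (x '' {k : ℤ × Fin p | k.2 ∉ S})).topologicalClosure :=
        Submodule.le_topologicalClosure _ (Submodule.subset_span ⟨m, hm, rfl⟩)
      rw [real_inner_comm]
      exact (horth (st12emb S i) i.2.2 _ hxm).symm
  -- A maps x-vectors to columns of C
  have hAxC : ∀ k : ℤ × Fin p, A (x k) = C (e2p p k) := by
    intro k
    apply st12_lp_ext
    intro m
    rw [he2, hcP, hAap, ← hC m k]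
  -- the closed subspace "supported off S" trick
  set DA : H →L[ℝ] Ell2p p := D.comp A with hDA
  have hDAap : ∀ w : H, DA w = D (A w) := fun w => rfl
  set Zm : Submodule ℝ H :=
    ⨅ m : {m : ℤ × Fin p // m.2 ∈ S},
      LinearMap.ker (((innerSL ℝ (lp.single 2 m.1 (1:ℝ) : Ell2p p)).comp DA : H →L[ℝ] ℝ) : H →ₗ[ℝ] ℝ) with hZm
  have hZmem : ∀ w : H, w ∈ Zm ↔
      ∀ m : ℤ × Fin p, m.2 ∈ S → (DA w : ∀ _ : ℤ × Fin p, ℝ) m = 0 := by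
    intro w
    rw [hZm, Submodule.mem_iInf]
    constructor
    · intro hk m hm
      have := hk ⟨m, hm⟩
      simp only [LinearMap.mem_ker, ContinuousLinearMap.coe_coe, ContinuousLinearMap.coe_comp', Function.comp_apply,
        innerSL_apply_apply] at this
      rwa [real_inner_comm, he2, hcP] at this
    · intro hall m
      simp only [LinearMap.mem_ker, ContinuousLinearMap.coe_coe, ContinuousLinearMap.coe_comp', Function.comp_apply,
        innerSL_apply_apply]
      rw [real_inner_comm, he2, hcP]
      exact hall m.1 m.2
  have hZc : IsClosed (Zm : Set H) := by
    rw [hZm, Submodule.coe_iInf]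
    exact isClosed_iInter fun m => ContinuousLinearMap.isClosed_ker _
  have hspan : (Submodule.span ℝ
      (x '' {k : ℤ × Fin p | k.2 ∉ S})).topologicalClosure ≤ Zm := by
    refine Submodule.topologicalClosure_minimal _ ?_ hZc
    rw [Submodule.span_le]
    rintro z ⟨k, hk, rfl⟩
    rw [SetLike.mem_coe, hZmem]
    intro m hm
    have hDAx : DA (x k) = e2p p k := by
      rw [hDAap, hAxC, hDC']
    rw [hDAx]
    have hne : m ≠ k := fun h => hk (h ▸ hm)
    rw [← he2]
    exact lp.single_apply_ne 2 k 1 hne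
  -- the key identity
  have hkey : ∀ i : ℤ × {c : Fin p // c ∈ S}, ∃ z : Ell2p p,
      (∀ m : ℤ × Fin p, m.2 ∈ S → (z : ∀ _ : ℤ × Fin p, ℝ) m = 0) ∧
      D (A (r (st12emb S i))) = e2p p (st12emb S i) - z := by
    intro i
    have hi : (st12emb S i).2 ∈ S := i.2.2
    refine ⟨DA (x (st12emb S i) - r (st12emb S i)), ?_, ?_⟩
    · exact fun m hm => (hZmem _).1 (hspan (hr (st12emb S i) hi).1) m hm
    · have hsplit : r (st12emb S i)
          = x (st12emb S i) - (x (st12emb S i) - r (st12emb S i)) := by abel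
      rw [hsplit, map_sub, map_sub, hAxC, hDC', hDAap]
      rw [← hsplit]
  -- the adjoint of iota restricts coordinates
  set ιc : Ell2S p S →L[ℝ] Ell2p p := (st12iota S).toContinuousLinearMap with hιdef
  have hιc : ∀ u, ιc u = st12iota S u := fun u => rfl
  set ιa : Ell2p p →L[ℝ] Ell2S p S := ContinuousLinearMap.adjoint ιc with hιadef
  have hιa : ∀ (z : Ell2p p) (k : ℤ × {c : Fin p // c ∈ S}),
      (ιa z : ∀ _ : ℤ × {c : Fin p // c ∈ S}, ℝ) k = z (st12emb S k) := by
    intro z k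
    rw [← st12_coord (ιa z) k, hιadef, ContinuousLinearMap.adjoint_inner_left]
    have : ιc (lp.single 2 k 1) = lp.single 2 (st12emb S k) 1 := st12iota_single S k
    rw [this, st12_coord]
  -- T applied to basis vectors
  have hTs : ∀ j, T (eS p S j) = ιa (D (e2p p (st12emb S j))) := by
    intro j
    apply st12_lp_ext
    intro k
    calc ⟪T (eS p S j), lp.single 2 k 1⟫_ℝ
        = ⟪D (e2p p (st12emb S j)), e2p p (st12emb S k)⟫_ℝ := hT k j
    _ = (D (e2p p (st12emb S j))) (st12emb S k) := hcP _ _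
    _ = (ιa (D (e2p p (st12emb S j)))) k := (hιa _ k).symm
    _ = ⟪ιa (D (e2p p (st12emb S j))), lp.single 2 k 1⟫_ℝ := (st12_coord _ k).symm
  -- self-adjointness of T and G
  have hTadj : ContinuousLinearMap.adjoint T = T := by
    apply st12_clm_ext
    intro j
    apply st12_lp_ext
    intro k
    rw [ContinuousLinearMap.adjoint_inner_left, real_inner_comm, heS, heS, hT j k, hT k j,
      hDsym, real_inner_comm]
  have hGadj : ContinuousLinearMap.adjoint G = G := by
    apply st12_clm_ext
    intro j
    apply st12_lp_ext
    intro k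
    rw [ContinuousLinearMap.adjoint_inner_left, real_inner_comm, heS, heS, hG j k, hG k j,
      real_inner_comm]
  -- the single-coordinate delta computation
  have hdelta : ∀ i j : ℤ × {c : Fin p // c ∈ S},
      ⟪D (A (r (st12emb S j))), e2p p (st12emb S i)⟫_ℝ = ⟪eS p S j, eS p S i⟫_ℝ := by
    intro i j
    obtain ⟨z, hz0, hzeq⟩ := hkey j
    rw [hzeq, inner_sub_left, hcP, hcP, hcS, hz0 _ i.2.2, sub_zero, ← he2, ← heS]
    by_cases hij : i = j
    · subst hij
      rw [lp.single_apply_self, lp.single_apply_self]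
    · rw [lp.single_apply_ne _ _ _ (fun h => hij (st12emb_inj S h)),
        lp.single_apply_ne _ _ _ hij]
  -- first statement : T ∘ G = id
  have hTG : T.comp G = ContinuousLinearMap.id ℝ (Ell2S p S) := by
    apply st12_clm_ext
    intro j
    apply st12_lp_ext
    intro i
    simp only [ContinuousLinearMap.comp_apply, ContinuousLinearMap.id_apply]
    rw [heS j]
    calc ⟪T (G (eS p S j)), lp.single 2 i 1⟫_ℝ
        = ⟪G (eS p S j), ContinuousLinearMap.adjoint T (lp.single 2 i 1)⟫_ℝ := by
          rw [← ContinuousLinearMap.adjoint_inner_right]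
    _ = ⟪G (eS p S j), ιa (D (e2p p (st12emb S i)))⟫_ℝ := by rw [hTadj, heS i, hTs i]
    _ = ⟪ιc (G (eS p S j)), D (e2p p (st12emb S i))⟫_ℝ := by
          rw [hιadef, ContinuousLinearMap.adjoint_inner_right]
    _ = ⟪A (r (st12emb S j)), D (e2p p (st12emb S i))⟫_ℝ := by rw [hιc, hgA j]
    _ = ⟪D (A (r (st12emb S j))), e2p p (st12emb S i)⟫_ℝ := (hDsym _ _).symm
    _ = ⟪eS p S j, eS p S i⟫_ℝ := hdelta i j
    _ = ⟪eS p S j, lp.single 2 i 1⟫_ℝ := by rw [heS i]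
  -- second statement : G ∘ T = id
  have hGT : G.comp T = ContinuousLinearMap.id ℝ (Ell2S p S) := by
    apply st12_clm_ext
    intro j
    apply st12_lp_ext
    intro i
    simp only [ContinuousLinearMap.comp_apply, ContinuousLinearMap.id_apply]
    rw [heS j]
    calc ⟪G (T (eS p S j)), lp.single 2 i 1⟫_ℝ
        = ⟪T (eS p S j), ContinuousLinearMap.adjoint G (lp.single 2 i 1)⟫_ℝ := by
          rw [← ContinuousLinearMap.adjoint_inner_right]
    _ = ⟪T (eS p S j), G (eS p S i)⟫_ℝ := by rw [hGadj, heS i]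
    _ = ⟪G (eS p S i), T (eS p S j)⟫_ℝ := real_inner_comm _ _
    _ = ⟪G (eS p S i), ιa (D (e2p p (st12emb S j)))⟫_ℝ := by rw [hTs j]
    _ = ⟪ιc (G (eS p S i)), D (e2p p (st12emb S j))⟫_ℝ := by
          rw [hιadef, ContinuousLinearMap.adjoint_inner_right]
    _ = ⟪A (r (st12emb S i)), D (e2p p (st12emb S j))⟫_ℝ := by rw [hιc, hgA i]
    _ = ⟪D (A (r (st12emb S i))), e2p p (st12emb S j)⟫_ℝ := (hDsym _ _).symm
    _ = ⟪eS p S i, eS p S j⟫_ℝ := hdelta j i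
    _ = ⟪eS p S j, eS p S i⟫_ℝ := real_inner_comm _ _
    _ = ⟪eS p S j, lp.single 2 i 1⟫_ℝ := by rw [heS i]
  refine ⟨hTG, hGT, ?_⟩
  -- Toeplitz part
  intro hTz a ha b hb t τ t' τ' hd
  set σ : (ℤ × {c : Fin p // c ∈ S}) ≃ (ℤ × {c : Fin p // c ∈ S}) :=
    (Equiv.addRight (1:ℤ)).prodCongr (Equiv.refl _) with hσ
  have hσap : ∀ k : ℤ × {c : Fin p // c ∈ S}, σ k = (k.1 + 1, k.2) := fun k => rfl
  have hσsy : ∀ k : ℤ × {c : Fin p // c ∈ S}, σ.symm k = (k.1 - 1, k.2) := fun k => rfl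
  set Uc : Ell2S p S →L[ℝ] Ell2S p S := (st12Shift σ).toContinuousLinearMap with hUdef
  have hUs : ∀ k, Uc (eS p S k) = eS p S (σ k) := fun k => st12Shift_single σ k
  have hUap : ∀ (u : Ell2S p S) (m : ℤ × {c : Fin p // c ∈ S}),
      (Uc u : ∀ _ : ℤ × {c : Fin p // c ∈ S}, ℝ) m = u (σ.symm m) := fun u m => rfl
  have hTU : T.comp Uc = Uc.comp T := by
    apply st12_clm_ext
    intro k
    apply st12_lp_ext
    intro i
    simp only [ContinuousLinearMap.comp_apply]
    rw [heS k, hUs k, heS i, hT i (σ k), hcS (Uc (T (eS p S k))) i,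
      hUap (T (eS p S k)) i, ← hcS (T (eS p S k)) (σ.symm i), hT (σ.symm i) k]
    have := hTz i.2.1 i.2.2 k.2.1 k.2.2 (i.1 - 1) k.1
    rw [sub_add_cancel] at this
    exact this.symm
  have hGTap : ∀ w, G (T w) = w := fun w => by
    have := ContinuousLinearMap.ext_iff.1 hGT w
    simpa using this
  have hTGap : ∀ w, T (G w) = w := fun w => by
    have := ContinuousLinearMap.ext_iff.1 hTG w
    simpa using this
  have hTUap : ∀ w, T (Uc w) = Uc (T w) := fun w => by
    have := ContinuousLinearMap.ext_iff.1 hTU w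
    simpa using this
  have hUG : ∀ v, G (Uc v) = Uc (G v) := by
    intro v
    calc G (Uc v) = G (Uc (T (G v))) := by rw [hTGap]
    _ = G (T (Uc (G v))) := by rw [hTUap]
    _ = Uc (G v) := hGTap _
  have hstep : ∀ s u : ℤ, ⟪r (s, a), r (u, b)⟫_ℝ = ⟪r (s + 1, a), r (u + 1, b)⟫_ℝ := by
    intro s u
    have hL : ⟪r (s, a), r (u, b)⟫_ℝ
        = ⟪G (eS p S (u, ⟨b, hb⟩)), eS p S (s, ⟨a, ha⟩)⟫_ℝ :=
      (hG (s, ⟨a, ha⟩) (u, ⟨b, hb⟩)).symm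
    have hR : ⟪r (s + 1, a), r (u + 1, b)⟫_ℝ
        = ⟪G (eS p S (u + 1, ⟨b, hb⟩)), eS p S (s + 1, ⟨a, ha⟩)⟫_ℝ :=
      (hG (s + 1, ⟨a, ha⟩) (u + 1, ⟨b, hb⟩)).symm
    rw [hL, hR]
    have h1 : eS p S (u + 1, ⟨b, hb⟩) = Uc (eS p S (u, ⟨b, hb⟩)) :=
      (hUs (u, ⟨b, hb⟩)).symm
    have h2 : eS p S (s + 1, ⟨a, ha⟩) = Uc (eS p S (s, ⟨a, ha⟩)) :=
      (hUs (s, ⟨a, ha⟩)).symm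
    rw [h1, h2, hUG]
    exact ((st12Shift σ).inner_map_map _ _).symm
  have hgen : ∀ d : ℤ, ∀ s u : ℤ,
      ⟪r (s, a), r (u, b)⟫_ℝ = ⟪r (s + d, a), r (u + d, b)⟫_ℝ := by
    intro d
    induction d using Int.induction_on with
    | zero => simp
    | succ n ih =>
        intro s u
        rw [show s + ((n : ℤ) + 1) = (s + n) + 1 by ring,
          show u + ((n : ℤ) + 1) = (u + n) + 1 by ring,
          ← hstep (s + n) (u + n)]
        exact ih s u
    | pred n ih =>
        intro s u
        have h := hstep (s + (-(n : ℤ) - 1)) (u + (-(n : ℤ) - 1))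
        rw [show s + (-(n : ℤ) - 1) + 1 = s + -(n : ℤ) by ring,
          show u + (-(n : ℤ) - 1) + 1 = u + -(n : ℤ) by ring] at h
        rw [h]
        exact ih s u
  have ht' : t' = t + (t' - t) := by omega
  have hτ' : τ' = τ + (t' - t) := by omega
  rw [ht', hτ']
  exact hgen (t' - t) t τ
end
end

section
/- (Proposition 3.1, node-wise regression identity.) Under Assumption 2.1, fix 1 ≤ a ≤ p and let P_a be the orthogonal projection onto the closed linear span of {x_{(s,c)} : s ∈ ℤ, c ≠ a}. For each t ∈ ℤ there exist unique square-summable coefficients α_{(τ,b)→(t,a)} (over τ ∈ ℤ, b ≠ a) such that P_a(x_{(t,a)}) equals the H-convergent sum Σ_{b≠a} Σ_{τ∈ℤ} α_{(τ,b)→(t,a)} x_{(τ,b)}; defining for each b ≠ a the infinite matrix B_{b→a} with [B_{b→a}]_{t,τ} = α_{(τ,b)→(t,a)}, one has the operator identity D_{a,b} = −D_{a,a} B_{b→a} on ℓ²(ℤ) for every b ≠ a. -/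
open scoped InnerProductSpace

noncomputable section

namespace S15aux

set_option linter.unusedSectionVars false

section CS
variable {V : Type*} [NormedAddCommGroup V] [InnerProductSpace ℝ V] [CompleteSpace V]

lemma cs_pos (A : V →L[ℝ] V) (hsym : ∀ u v : V, ⟪A u, v⟫_ℝ = ⟪u, A v⟫_ℝ)
    (hnn : ∀ v : V, 0 ≤ ⟪A v, v⟫_ℝ) (u v : V) :
    ⟪A u, v⟫_ℝ ^ 2 ≤ ⟪A u, u⟫_ℝ * ⟪A v, v⟫_ℝ := by
  have key : discrim ⟪A v, v⟫_ℝ (2 * ⟪A u, v⟫_ℝ) ⟪A u, u⟫_ℝ ≤ 0 := by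
    apply discrim_le_zero
    intro t
    have h0 := hnn (u + t • v)
    have expand : ⟪A (u + t • v), u + t • v⟫_ℝ
        = ⟪A v, v⟫_ℝ * t ^ 2 + 2 * ⟪A u, v⟫_ℝ * t + ⟪A u, u⟫_ℝ := by
      have hsymuv : ⟪A v, u⟫_ℝ = ⟪A u, v⟫_ℝ := by
        rw [hsym v u, real_inner_comm]
      simp only [map_add, map_smul, inner_add_left, inner_add_right,
        real_inner_smul_left, real_inner_smul_right, hsymuv]
      ring
    linarith [expand ▸ h0]
  rw [discrim] at key
  nlinarith [key]

lemma surj_of_coercive (A : V →L[ℝ] V) (μ : ℝ) (hμ : 0 < μ)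
    (h : ∀ v : V, μ * ‖v‖ ^ 2 ≤ ⟪A v, v⟫_ℝ) : Function.Surjective A := by
  have hB : IsCoercive ((innerSL ℝ).comp A : V →L[ℝ] V →L[ℝ] ℝ) := by
    refine ⟨μ, hμ, fun u => ?_⟩
    have := h u
    simpa [ContinuousLinearMap.comp_apply, mul_assoc, sq] using this
  set e := hB.continuousLinearEquivOfBilin with he
  have key : ∀ v, e v = A v := by
    intro v
    apply ext_inner_right ℝ
    intro w
    rw [hB.continuousLinearEquivOfBilin_apply]
    simp [ContinuousLinearMap.comp_apply]
  intro y
  exact ⟨e.symm y, by rw [← key, e.apply_symm_apply]⟩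

end CS

variable {H : Type*} [NormedAddCommGroup H] [InnerProductSpace ℝ H] [CompleteSpace H]
variable {p : ℕ}

lemma memℓp_of_sq {ι : Type*} (α : ι → ℝ) (h : Summable fun i => α i ^ 2) : Memℓp α 2 := by
  apply memℓp_gen; convert h using 2 with i; simp [Real.rpow_natCast]

lemma sq_summable {ι : Type*} (v : lp (fun _ : ι => ℝ) 2) : Summable fun i => (v i) ^ 2 := by
  have := lp.memℓp v
  rw [memℓp_gen_iff (by norm_num)] at this
  convert this using 2 with i
  simp [Real.rpow_natCast]

def iotaFun (a : Fin p) (w : ℤ → ℝ) : ℤ × Fin p → ℝ := fun j => if j.2 = a then w j.1 else 0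

lemma iota_memℓp (a : Fin p) (w : Ell2Z) : Memℓp (iotaFun a w) 2 := by
  apply memℓp_of_sq
  have hw : Summable fun τ : ℤ => (w τ)^2 := sq_summable w
  have hinj : Function.Injective (fun τ : ℤ => ((τ, a) : ℤ × Fin p)) := by
    intro s t h; simpa using congrArg Prod.fst h
  rw [← hinj.summable_iff (f := fun j : ℤ × Fin p => (iotaFun a w j)^2) ?_]
  · convert hw using 2 with τ; simp [iotaFun]
  · intro j hj
    have : j.2 ≠ a := by
      intro hja; exact hj ⟨j.1, by ext <;> simp [hja.symm]⟩
    simp [iotaFun, this]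

def iotaL (a : Fin p) : Ell2Z →ₗ[ℝ] Ell2p p where
  toFun w := ⟨iotaFun a w, iota_memℓp a w⟩
  map_add' u v := by
    ext j; simp only [lp.coeFn_add, Pi.add_apply]
    show iotaFun a (u + v) j = iotaFun a u j + iotaFun a v j
    simp [iotaFun]; split <;> simp
  map_smul' c v := by
    ext j
    show iotaFun a (c • v) j = (c • (⟨iotaFun a v, iota_memℓp a v⟩ : Ell2p p)) j
    rw [lp.coeFn_smul]
    show iotaFun a (c • v) j = c • iotaFun a v j
    simp only [iotaFun, lp.coeFn_smul, Pi.smul_apply]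
    split <;> simp

lemma iotaL_apply (a : Fin p) (w : Ell2Z) (j : ℤ × Fin p) :
    (iotaL a w) j = if j.2 = a then w j.1 else 0 := rfl

lemma inner_iota_iota (a : Fin p) (u v : Ell2Z) :
    ⟪iotaL a u, iotaL a v⟫_ℝ = ⟪u, v⟫_ℝ := by
  rw [lp.inner_eq_tsum, lp.inner_eq_tsum]
  have hinj : Function.Injective (fun τ : ℤ => ((τ, a) : ℤ × Fin p)) := by
    intro s t h; simpa using congrArg Prod.fst h
  rw [← hinj.tsum_eq (f := fun j : ℤ × Fin p => ⟪(iotaL a u) j, (iotaL a v) j⟫_ℝ) ?_]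
  · apply tsum_congr; intro τ; simp [iotaL_apply]
  · intro j hj
    rcases j with ⟨τ, b⟩
    by_cases hb : b = a
    · exact ⟨τ, by rw [hb]⟩
    · exfalso; apply hj; simp [iotaL_apply, hb]

lemma norm_iotaL (a : Fin p) (w : Ell2Z) : ‖iotaL a w‖ = ‖w‖ := by
  have h := inner_iota_iota a w w
  rw [real_inner_self_eq_norm_sq, real_inner_self_eq_norm_sq] at h
  nlinarith [norm_nonneg (iotaL a w), norm_nonneg w]

def iota (a : Fin p) : Ell2Z →L[ℝ] Ell2p p :=
  (iotaL a).mkContinuous 1 (fun w => by rw [norm_iotaL]; simp)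

lemma iota_apply (a : Fin p) (w : Ell2Z) (j : ℤ × Fin p) :
    (iota a w) j = if j.2 = a then w j.1 else 0 := rfl

lemma norm_iota (a : Fin p) (w : Ell2Z) : ‖iota a w‖ = ‖w‖ := norm_iotaL a w

lemma iota_single (a : Fin p) (t : ℤ) : iota a (eZ t) = e2p p (t, a) := by
  ext j
  rcases j with ⟨τ, b⟩
  rw [iota_apply]
  by_cases hb : b = a <;>
    simp [hb, eZ, e2p, lp.single_apply, Pi.single_apply, Prod.ext_iff]

def resa (a : Fin p) : Ell2p p →L[ℝ] Ell2Z := ContinuousLinearMap.adjoint (iota a)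

lemma inner_resa (a : Fin p) (v : Ell2p p) (w : Ell2Z) :
    ⟪resa a v, w⟫_ℝ = ⟪v, iota a w⟫_ℝ := ContinuousLinearMap.adjoint_inner_left _ _ _

lemma coordZ (v : Ell2Z) (t : ℤ) : ⟪v, eZ t⟫_ℝ = v t := by
  simp [eZ, lp.inner_single_right, RCLike.inner_apply]

lemma coord2p (v : Ell2p p) (i : ℤ × Fin p) : ⟪v, e2p p i⟫_ℝ = v i := by
  simp [e2p, lp.inner_single_right, RCLike.inner_apply]

lemma resa_apply (a : Fin p) (v : Ell2p p) (t : ℤ) : (resa a v) t = v (t, a) := by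
  rw [← coordZ, inner_resa, iota_single, coord2p]

lemma row_support (a : Fin p) (v : Ell2p p) (h : ∀ j : ℤ × Fin p, j.2 ≠ a → v j = 0) :
    iota a (resa a v) = v := by
  ext j
  rcases j with ⟨τ, b⟩
  rw [iota_apply]
  by_cases hb : b = a
  · subst hb; rw [resa_apply]; simp
  · simp only [hb, if_false]
    exact (h (τ, b) hb).symm

lemma e2p_orthonormal (p : ℕ) (i j : ℤ × Fin p) :
    ⟪e2p p i, e2p p j⟫_ℝ = if i = j then 1 else 0 := by
  rw [e2p, e2p, lp.inner_single_left, lp.single_apply]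
  split <;> simp_all [RCLike.inner_apply]

lemma hasSum_basis (p : ℕ) (v : Ell2p p) : HasSum (fun i => v i • e2p p i) v := by
  have := lp.hasSum_single (E := fun _ : ℤ × Fin p => ℝ) ENNReal.ofNat_ne_top v
  convert this using 2 with i
  rw [e2p, ← lp.single_smul]
  norm_num

lemma hasSum_basisZ (v : Ell2Z) : HasSum (fun t => v t • eZ t) v := by
  have := lp.hasSum_single (E := fun _ : ℤ => ℝ) ENNReal.ofNat_ne_top v
  convert this using 2 with i
  rw [eZ, ← lp.single_smul]
  norm_num

lemma opZ_ext (A B : Ell2Z →L[ℝ] Ell2Z)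
    (h : ∀ t τ : ℤ, ⟪A (eZ τ), eZ t⟫_ℝ = ⟪B (eZ τ), eZ t⟫_ℝ) : A = B := by
  refine ContinuousLinearMap.ext fun v => ?_
  have h1 : ∀ τ, A (eZ τ) = B (eZ τ) := by
    intro τ; ext t
    have := h t τ; rwa [coordZ, coordZ] at this
  have hA := (hasSum_basisZ v).mapL A
  have hB := (hasSum_basisZ v).mapL B
  simp only [map_smul] at hA hB
  refine hA.unique ?_
  simpa only [h1] using hB

lemma bessel_bound (x : ℤ × Fin p → H) (lamSup : ℝ)
    (C : Ell2p p →L[ℝ] Ell2p p)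
    (hC : ∀ i j : ℤ × Fin p, ⟪C (e2p p j), e2p p i⟫_ℝ = ⟪x i, x j⟫_ℝ)
    (hhi : ∀ v : Ell2p p, ⟪C v, v⟫_ℝ ≤ lamSup * ‖v‖ ^ 2)
    (s : Finset (ℤ × Fin p)) (α : (ℤ × Fin p) → ℝ) :
    ‖∑ i ∈ s, α i • x i‖ ^ 2 ≤ lamSup * ∑ i ∈ s, (α i) ^ 2 := by
  set v : Ell2p p := ∑ i ∈ s, α i • e2p p i with hv
  have h1 : ⟪C v, v⟫_ℝ = ‖∑ i ∈ s, α i • x i‖ ^ 2 := by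
    rw [← real_inner_self_eq_norm_sq]
    rw [hv, map_sum, sum_inner, sum_inner]
    apply Finset.sum_congr rfl
    intro i _
    rw [inner_sum, inner_sum]
    apply Finset.sum_congr rfl
    intro j _
    rw [map_smul, real_inner_smul_left, real_inner_smul_left,
      real_inner_smul_right, real_inner_smul_right, hC j i,
      real_inner_comm (x j) (x i)]
  have h2 : ‖v‖ ^ 2 = ∑ i ∈ s, (α i) ^ 2 := by
    rw [← real_inner_self_eq_norm_sq, hv, sum_inner]
    apply Finset.sum_congr rfl
    intro i hi
    rw [inner_sum, Finset.sum_eq_single i]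
    · rw [real_inner_smul_left, real_inner_smul_right, e2p_orthonormal]
      simp [sq]
    · intro j _ hji
      rw [real_inner_smul_left, real_inner_smul_right, e2p_orthonormal]
      simp [hji.symm]
    · intro h; exact absurd hi h
  calc ‖∑ i ∈ s, α i • x i‖ ^ 2 = ⟪C v, v⟫_ℝ := h1.symm
    _ ≤ lamSup * ‖v‖ ^ 2 := hhi v
    _ = lamSup * ∑ i ∈ s, (α i) ^ 2 := by rw [h2]

lemma summable_smul_x (x : ℤ × Fin p → H) (lamSup : ℝ) (hls : 0 < lamSup)
    (C : Ell2p p →L[ℝ] Ell2p p)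
    (hC : ∀ i j : ℤ × Fin p, ⟪C (e2p p j), e2p p i⟫_ℝ = ⟪x i, x j⟫_ℝ)
    (hhi : ∀ v : Ell2p p, ⟪C v, v⟫_ℝ ≤ lamSup * ‖v‖ ^ 2)
    (α : (ℤ × Fin p) → ℝ) (hα : Summable fun i => α i ^ 2) :
    Summable (fun i => α i • x i) := by
  rw [summable_iff_vanishing_norm]
  intro ε hε
  obtain ⟨s, hs⟩ := summable_iff_vanishing_norm.mp hα (ε ^ 2 / lamSup) (by positivity)
  refine ⟨s, fun t ht => ?_⟩
  have hb := bessel_bound x lamSup C hC hhi t α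
  have h2 : ∑ i ∈ t, (α i) ^ 2 < ε ^ 2 / lamSup := by
    have := hs t ht
    calc ∑ i ∈ t, (α i) ^ 2 ≤ ‖∑ i ∈ t, (α i) ^ 2‖ := le_abs_self _
      _ < ε ^ 2 / lamSup := this
  have : ‖∑ i ∈ t, α i • x i‖ ^ 2 < ε ^ 2 := by
    calc ‖∑ i ∈ t, α i • x i‖ ^ 2 ≤ lamSup * ∑ i ∈ t, (α i) ^ 2 := hb
      _ < lamSup * (ε ^ 2 / lamSup) := by exact (mul_lt_mul_iff_right₀ hls).mpr h2
      _ = ε ^ 2 := by field_simp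
  exact lt_of_pow_lt_pow_left₀ 2 hε.le this

lemma gram_coord (x : ℤ × Fin p → H)
    (C : Ell2p p →L[ℝ] Ell2p p)
    (hC : ∀ i j : ℤ × Fin p, ⟪C (e2p p j), e2p p i⟫_ℝ = ⟪x i, x j⟫_ℝ)
    (v : Ell2p p) (y : H) (hy : HasSum (fun i => v i • x i) y)
    (j : ℤ × Fin p) : ⟪C v, e2p p j⟫_ℝ = ⟪x j, y⟫_ℝ := by
  have h1 := hasSum_basis p v
  have h2 : HasSum (fun i => ((innerSL ℝ (e2p p j)).comp C) (v i • e2p p i))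
      (((innerSL ℝ (e2p p j)).comp C) v) := h1.mapL _
  have h3 : HasSum (fun i => (innerSL ℝ (x j)) (v i • x i)) ((innerSL ℝ (x j)) y) := hy.mapL _
  have heq : (fun i => ((innerSL ℝ (e2p p j)).comp C) (v i • e2p p i))
      = fun i => (innerSL ℝ (x j)) (v i • x i) := by
    funext i
    simp only [ContinuousLinearMap.comp_apply, innerSL_apply_apply, map_smul,
      real_inner_smul_right]
    congr 1
    rw [← hC j i]
    exact real_inner_comm _ _
  rw [heq] at h2
  have := h2.unique h3
  simp only [ContinuousLinearMap.comp_apply, innerSL_apply_apply] at this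
  rw [real_inner_comm]
  exact this

lemma D_coercive (C D : Ell2p p →L[ℝ] Ell2p p) (lamInf lamSup : ℝ)
    (hpos : 0 < lamInf) (hls : 0 < lamSup)
    (hCsa : ∀ u v : Ell2p p, ⟪C u, v⟫_ℝ = ⟪u, C v⟫_ℝ)
    (hlo : ∀ v : Ell2p p, lamInf * ‖v‖ ^ 2 ≤ ⟪C v, v⟫_ℝ)
    (hhi : ∀ v : Ell2p p, ⟪C v, v⟫_ℝ ≤ lamSup * ‖v‖ ^ 2)
    (hCapp : ∀ w : Ell2p p, C (D w) = w) :
    ∀ v : Ell2p p, lamSup⁻¹ * ‖v‖ ^ 2 ≤ ⟪D v, v⟫_ℝ := by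
  intro v
  have hnn : ∀ z : Ell2p p, 0 ≤ ⟪C z, z⟫_ℝ := fun z =>
    le_trans (by positivity) (hlo z)
  set w := D v with hw
  have hv : C w = v := hCapp v
  have h1 : ⟪D v, v⟫_ℝ = ⟪C w, w⟫_ℝ := by
    rw [← hw, ← hv, real_inner_comm]
  rw [h1]
  have hcs := cs_pos C hCsa hnn w (C w)
  have h2 : ⟪C (C w), C w⟫_ℝ ≤ lamSup * ‖C w‖ ^ 2 := hhi (C w)
  have h3 : ⟪C w, C w⟫_ℝ = ‖v‖ ^ 2 := by
    rw [hv, real_inner_self_eq_norm_sq]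
  rcases eq_or_ne v 0 with rfl | hv0
  · simpa using hnn w
  · have hv2 : 0 < ‖v‖ ^ 2 := by
      have := norm_pos_iff.mpr hv0
      positivity
    have hCw : ‖C w‖ ^ 2 = ‖v‖ ^ 2 := by rw [hv]
    rw [hCw] at h2
    rw [h3] at hcs
    -- hcs : (‖v‖^2)^2 ≤ ⟪C w, w⟫ * ⟪C (C w), C w⟫
    have h4 : (‖v‖ ^ 2) * (‖v‖ ^ 2) ≤ ⟪C w, w⟫_ℝ * (lamSup * ‖v‖ ^ 2) := by
      nlinarith [hnn w]
    have h5 : ‖v‖ ^ 2 ≤ ⟪C w, w⟫_ℝ * lamSup := by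
      have := (mul_le_mul_iff_left₀ hv2).mp (by nlinarith [h4] : ‖v‖ ^ 2 * ‖v‖ ^ 2 ≤ (⟪C w, w⟫_ℝ * lamSup) * ‖v‖ ^ 2)
      exact this
    rw [inv_mul_le_iff₀ hls]
    linarith

end S15aux

open S15aux

set_option maxHeartbeats 1000000 in
/-- **Proposition 3.1.** Node-wise regression: existence and uniqueness of the
square-summable coefficients of the projection of `x_{(t,a)}` on the other component series,
and the operator identity `D_{a,b} = -D_{a,a} B_{b→a}`. -/
theorem statement_15
    {H : Type*} [NormedAddCommGroup H] [InnerProductSpace ℝ H] [CompleteSpace H]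
    (p : ℕ) (hp : 1 ≤ p) (x : ℤ × Fin p → H)
    (lamInf lamSup : ℝ)
    (hInf : IsGLB (gramQuadSet x) lamInf)
    (hSup : IsLUB (gramQuadSet x) lamSup)
    (hpos : 0 < lamInf)
    (C : Ell2p p →L[ℝ] Ell2p p)
    (hC : ∀ i j : ℤ × Fin p, ⟪C (e2p p j), e2p p i⟫_ℝ = ⟪x i, x j⟫_ℝ)
    (hCsa : ∀ u v : Ell2p p, ⟪C u, v⟫_ℝ = ⟪u, C v⟫_ℝ)
    (hlo : ∀ v : Ell2p p, lamInf * ‖v‖ ^ 2 ≤ ⟪C v, v⟫_ℝ)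
    (hhi : ∀ v : Ell2p p, ⟪C v, v⟫_ℝ ≤ lamSup * ‖v‖ ^ 2)
    (D : Ell2p p →L[ℝ] Ell2p p)
    (hCD : C.comp D = ContinuousLinearMap.id ℝ (Ell2p p))
    (hDC : D.comp C = ContinuousLinearMap.id ℝ (Ell2p p))
    (Dblk : Fin p → Fin p → (Ell2Z →L[ℝ] Ell2Z))
    (hDblk : ∀ (a b : Fin p) (t τ : ℤ),
        ⟪Dblk a b (eZ τ), eZ t⟫_ℝ = ⟪D (e2p p (τ, b)), e2p p (t, a)⟫_ℝ)
    (a : Fin p) :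
    -- existence and uniqueness of the node-wise regression coefficients
    (∀ t : ℤ, ∃ α : (ℤ × Fin p) → ℝ,
      ((∀ τ : ℤ, α (τ, a) = 0) ∧ Summable (fun j : ℤ × Fin p => (α j) ^ 2) ∧
        ∃ y : H, HasSum (fun j : ℤ × Fin p => α j • x j) y ∧
          y ∈ (Submodule.span ℝ (x '' {k : ℤ × Fin p | k.2 ≠ a})).topologicalClosure ∧
          (∀ j : ℤ × Fin p, j.2 ≠ a → ⟪x (t, a) - y, x j⟫_ℝ = 0)) ∧
      (∀ α' : (ℤ × Fin p) → ℝ,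
        ((∀ τ : ℤ, α' (τ, a) = 0) ∧ Summable (fun j : ℤ × Fin p => (α' j) ^ 2) ∧
          ∃ y : H, HasSum (fun j : ℤ × Fin p => α' j • x j) y ∧
            y ∈ (Submodule.span ℝ (x '' {k : ℤ × Fin p | k.2 ≠ a})).topologicalClosure ∧
            (∀ j : ℤ × Fin p, j.2 ≠ a → ⟪x (t, a) - y, x j⟫_ℝ = 0)) → α' = α)) ∧
    -- the operator identity `D_{a,b} = -D_{a,a} B_{b→a}`
    (∀ α : ℤ → (ℤ × Fin p) → ℝ,
      (∀ t : ℤ, (∀ τ : ℤ, α t (τ, a) = 0) ∧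
        Summable (fun j : ℤ × Fin p => (α t j) ^ 2) ∧
        ∃ y : H, HasSum (fun j : ℤ × Fin p => α t j • x j) y ∧
          y ∈ (Submodule.span ℝ (x '' {k : ℤ × Fin p | k.2 ≠ a})).topologicalClosure ∧
          (∀ j : ℤ × Fin p, j.2 ≠ a → ⟪x (t, a) - y, x j⟫_ℝ = 0)) →
      ∀ b : Fin p, b ≠ a → ∀ Bop : Ell2Z →L[ℝ] Ell2Z,
        (∀ t τ : ℤ, ⟪Bop (eZ τ), eZ t⟫_ℝ = α t (τ, b)) →
        Dblk a b = -((Dblk a a).comp Bop)) := by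
  -- basic consequences
  have hCapp : ∀ w : Ell2p p, C (D w) = w := by
    intro w
    have := ContinuousLinearMap.ext_iff.mp hCD w
    simpa using this
  have hDapp : ∀ w : Ell2p p, D (C w) = w := by
    intro w
    have := ContinuousLinearMap.ext_iff.mp hDC w
    simpa using this
  have hDsa : ∀ u v : Ell2p p, ⟪D u, v⟫_ℝ = ⟪u, D v⟫_ℝ := by
    intro u v
    conv_lhs => rw [← hCapp v]
    rw [← hCsa (D u) (D v), hCapp u]
  -- lamSup > 0
  have hls : 0 < lamSup := by
    set v0 := e2p p (0, ⟨0, hp⟩)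
    have hn : ‖v0‖ ^ 2 = 1 := by
      rw [← real_inner_self_eq_norm_sq]
      simpa using e2p_orthonormal p (0, ⟨0, hp⟩) (0, ⟨0, hp⟩)
    have h1 := hlo v0
    have h2 := hhi v0
    rw [hn] at h1 h2
    simp only [mul_one] at h1 h2
    linarith
  have hDco := D_coercive C D lamInf lamSup hpos hls hCsa hlo hhi hCapp
  -- identification of Dblk blocks
  have hDblk_eq : ∀ b : Fin p, Dblk a b = (resa a).comp (D.comp (iota b)) := by
    intro b
    apply opZ_ext
    intro t τ
    rw [hDblk a b t τ]
    rw [ContinuousLinearMap.comp_apply, ContinuousLinearMap.comp_apply,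
      inner_resa, iota_single, iota_single]
  -- coercivity and surjectivity of Dblk a a
  have hDaa_co : ∀ c : Ell2Z, lamSup⁻¹ * ‖c‖ ^ 2 ≤ ⟪Dblk a a c, c⟫_ℝ := by
    intro c
    rw [hDblk_eq a]
    rw [ContinuousLinearMap.comp_apply, ContinuousLinearMap.comp_apply,
      inner_resa]
    have := hDco (iota a c)
    calc lamSup⁻¹ * ‖c‖ ^ 2 = lamSup⁻¹ * ‖iota a c‖ ^ 2 := by rw [norm_iota]
      _ ≤ ⟪D (iota a c), iota a c⟫_ℝ := this
      _ = ⟪D (iota a c), iota a c⟫_ℝ := rfl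
  have hDaa_surj : Function.Surjective (Dblk a a) :=
    surj_of_coercive (Dblk a a) lamSup⁻¹ (by positivity) hDaa_co
  have hDaa_sa : ∀ u v : Ell2Z, ⟪Dblk a a u, v⟫_ℝ = ⟪u, Dblk a a v⟫_ℝ := by
    intro u v
    rw [hDblk_eq a]
    simp only [ContinuousLinearMap.comp_apply]
    rw [inner_resa, hDsa]
    have h2 := inner_resa a (D ((iota a) v)) u
    have h3 : ⟪(iota a) u, D ((iota a) v)⟫_ℝ = ⟪D ((iota a) v), (iota a) u⟫_ℝ :=
      real_inner_comm _ _
    have h4 : ⟪u, resa a (D ((iota a) v))⟫_ℝ = ⟪resa a (D ((iota a) v)), u⟫_ℝ :=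
      real_inner_comm _ _
    linarith [h2, h3, h4]
  -- the key analysis of any admissible α (used for part 2 and for existence rewriting)
  constructor
  · -- Part 1
    intro t
    obtain ⟨c, hc⟩ := hDaa_surj (eZ t)
    set u : Ell2p p := D (iota a c) with hu
    set αlp : Ell2p p := e2p p (t, a) - u with hαlp
    have hresau : resa a u = eZ t := by
      rw [hu, ← hc, hDblk_eq a]
      rfl
    have h0 : ∀ τ : ℤ, αlp (τ, a) = 0 := by
      intro τ
      have h1 : αlp (τ, a) = e2p p (t, a) (τ, a) - u (τ, a) := by
        rw [hαlp, lp.coeFn_sub]; rfl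
      have h2 : u (τ, a) = (eZ t) τ := by
        rw [← resa_apply a u τ, hresau]
      rw [h1, h2]
      simp [e2p, eZ, lp.single_apply, Pi.single_apply, Prod.ext_iff]
    have hsq : Summable (fun j : ℤ × Fin p => (αlp j) ^ 2) := sq_summable αlp
    have hsum : Summable (fun j : ℤ × Fin p => αlp j • x j) :=
      summable_smul_x x lamSup hls C hC hhi _ hsq
    set y := ∑' j : ℤ × Fin p, αlp j • x j with hy_def
    have hy : HasSum (fun j : ℤ × Fin p => αlp j • x j) y := hsum.hasSum
    have hymem : y ∈ (Submodule.span ℝ (x '' {k : ℤ × Fin p | k.2 ≠ a})).topologicalClosure := by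
      rw [← SetLike.mem_coe, Submodule.topologicalClosure_coe]
      refine mem_closure_of_tendsto hy (Filter.Eventually.of_forall ?_)
      intro s
      rw [SetLike.mem_coe]
      apply Submodule.sum_mem
      intro j _
      by_cases hj : j.2 = a
      · have : αlp j = 0 := by
          rcases j with ⟨τ, b⟩
          simp only at hj
          rw [hj] at *
          exact h0 τ
        rw [this, zero_smul]
        exact Submodule.zero_mem _
      · exact Submodule.smul_mem _ _ (Submodule.subset_span ⟨j, hj, rfl⟩)
    have horth : ∀ j : ℤ × Fin p, j.2 ≠ a → ⟪x (t, a) - y, x j⟫_ℝ = 0 := by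
      intro j hj
      have hG : ⟪C αlp, e2p p j⟫_ℝ = ⟪x j, y⟫_ℝ := gram_coord x C hC αlp y hy j
      have hGe : ⟪C (e2p p (t, a)), e2p p j⟫_ℝ = ⟪x j, x (t, a)⟫_ℝ := hC j (t, a)
      have hCu : C u = iota a c := by rw [hu, hCapp]
      have he : e2p p (t, a) - αlp = u := by rw [hαlp]; abel
      have h1 : ⟪C u, e2p p j⟫_ℝ = ⟪x j, x (t, a)⟫_ℝ - ⟪x j, y⟫_ℝ := by
        rw [← he, map_sub, inner_sub_left, hG, hGe]
      have h2 : ⟪C u, e2p p j⟫_ℝ = 0 := by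
        rw [hCu, coord2p, iota_apply, if_neg hj]
      rw [inner_sub_left]
      have c1 : ⟪x (t, a), x j⟫_ℝ = ⟪x j, x (t, a)⟫_ℝ := real_inner_comm _ _
      have c2 : ⟪y, x j⟫_ℝ = ⟪x j, y⟫_ℝ := real_inner_comm _ _
      linarith [h1, h2, c1, c2]
    refine ⟨fun j => αlp j, ⟨h0, hsq, y, hy, hymem, horth⟩, ?_⟩
    -- uniqueness
    rintro α' ⟨h0', hsq', y', hy', hymem', horth'⟩
    have hyy : y' = y := by
      have hdmem : y - y' ∈ (Submodule.span ℝ (x '' {k : ℤ × Fin p | k.2 ≠ a})).topologicalClosure :=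
        Submodule.sub_mem _ hymem hymem'
      have hspan : Submodule.span ℝ (x '' {k : ℤ × Fin p | k.2 ≠ a})
          ≤ (innerSL ℝ (y - y')).ker := by
        rw [Submodule.span_le]
        rintro z ⟨j, hj, rfl⟩
        simp only [SetLike.mem_coe, LinearMap.mem_ker]
        show ⟪y - y', x j⟫_ℝ = 0
        have e1 := horth j hj
        have e2 := horth' j hj
        have : y - y' = (x (t,a) - y') - (x (t,a) - y) := by abel
        rw [this, inner_sub_left, e1, e2, sub_zero]
      have hle : (Submodule.span ℝ (x '' {k : ℤ × Fin p | k.2 ≠ a})).topologicalClosure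
          ≤ (innerSL ℝ (y - y')).ker :=
        Submodule.topologicalClosure_minimal _ hspan (ContinuousLinearMap.isClosed_ker (innerSL ℝ (y - y')))
      have hmem2 := hle hdmem
      rw [LinearMap.mem_ker] at hmem2
      have hz : ⟪y - y', y - y'⟫_ℝ = 0 := hmem2
      have := inner_self_eq_zero.mp hz
      rw [sub_eq_zero] at this
      exact this.symm
    set α'lp : Ell2p p := ⟨α', memℓp_of_sq α' hsq'⟩ with hα'lp
    have hcoe' : ∀ j, α'lp j = α' j := fun j => rfl
    have hδ : HasSum (fun j : ℤ × Fin p => ((αlp - α'lp) j) • x j) 0 := by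
      have h1 : HasSum (fun j : ℤ × Fin p => αlp j • x j - α'lp j • x j) (y - y) := by
        apply hy.sub
        rw [← hyy]
        exact hy'
      rw [sub_self] at h1
      convert h1 using 2 with j
      rw [lp.coeFn_sub, Pi.sub_apply, sub_smul]
    have hCzero : C (αlp - α'lp) = 0 := by
      ext j
      have := gram_coord x C hC (αlp - α'lp) 0 hδ j
      rw [inner_zero_right] at this
      rw [← coord2p (C (αlp - α'lp)) j, this]
      rfl
    have hδ0 : αlp - α'lp = 0 := by
      have := hDapp (αlp - α'lp)
      rw [hCzero, map_zero] at this
      exact this.symm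
    have heq : α'lp = αlp := by
      have := sub_eq_zero.mp hδ0
      exact this.symm
    funext j
    rw [← hcoe' j, heq]
  · -- Part 2
    intro α hα b hb B hB
    apply opZ_ext
    intro t τ
    -- per-node analysis
    have key : ∀ s : ℤ, ∃ c : Ell2Z, (⟨α s, memℓp_of_sq _ (hα s).2.1⟩ : Ell2p p)
        = e2p p (s, a) - D (iota a c) ∧ Dblk a a c = eZ s := by
      intro s
      obtain ⟨h0s, hsqs, ys, hys, _, horths⟩ := hα s
      set αlp : Ell2p p := ⟨α s, memℓp_of_sq _ hsqs⟩ with hαlp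
      set u : Ell2p p := e2p p (s, a) - αlp with hu
      have f1 : ∀ j : ℤ × Fin p, j.2 ≠ a → (C u) j = 0 := by
        intro j hj
        have hG : ⟪C αlp, e2p p j⟫_ℝ = ⟪x j, ys⟫_ℝ := gram_coord x C hC αlp ys hys j
        have hGe : ⟪C (e2p p (s, a)), e2p p j⟫_ℝ = ⟪x j, x (s, a)⟫_ℝ := hC j (s, a)
        have h1 : (C u) j = ⟪C u, e2p p j⟫_ℝ := (coord2p _ _).symm
        rw [h1, hu, map_sub, inner_sub_left, hG, hGe]
        have := horths j hj
        rw [inner_sub_left] at this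
        have c1 : ⟪x (s, a), x j⟫_ℝ = ⟪x j, x (s, a)⟫_ℝ := real_inner_comm _ _
        have c2 : ⟪ys, x j⟫_ℝ = ⟪x j, ys⟫_ℝ := real_inner_comm _ _
        linarith
      set c : Ell2Z := resa a (C u) with hc
      have f2 : iota a c = C u := row_support a (C u) f1
      have f3 : u = D (iota a c) := by
        rw [f2, hDapp]
      have f4 : Dblk a a c = eZ s := by
        rw [hDblk_eq a]
        show resa a (D (iota a c)) = eZ s
        rw [← f3]
        ext τ'
        rw [resa_apply]
        have : u (τ', a) = e2p p (s,a) (τ', a) - αlp (τ', a) := by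
          rw [hu, lp.coeFn_sub]; rfl
        rw [this]
        have hz : αlp (τ', a) = 0 := h0s τ'
        rw [hz, sub_zero]
        simp [e2p, eZ, lp.single_apply, Pi.single_apply, Prod.ext_iff]
      refine ⟨c, ?_, f4⟩
      rw [← f3, hu]
      abel
    -- solve Daa k = h where h = resa a (D e2p (τ, b))
    set h : Ell2Z := resa a (D (e2p p (τ, b))) with hh
    obtain ⟨k, hk⟩ := hDaa_surj h
    -- α s (τ, b) = -k s
    have f5 : ∀ s : ℤ, α s (τ, b) = - k s := by
      intro s
      obtain ⟨c, hcs, hcd⟩ := key s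
      have h1 : α s (τ, b) = (⟨α s, memℓp_of_sq _ (hα s).2.1⟩ : Ell2p p) (τ, b) := rfl
      rw [h1, hcs]
      have h2 : (e2p p (s, a) - D (iota a c)) (τ, b)
          = e2p p (s, a) (τ, b) - (D (iota a c)) (τ, b) := by
        rw [lp.coeFn_sub]; rfl
      rw [h2]
      have h3 : e2p p (s, a) (τ, b) = 0 := by
        simp [e2p, lp.single_apply, Prod.ext_iff, hb]
      have h4 : (D (iota a c)) (τ, b) = k s := by
        rw [← coord2p, hDsa]
        have h5 : ⟪iota a c, D (e2p p (τ, b))⟫_ℝ = ⟪c, h⟫_ℝ := by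
          rw [hh]
          have e1 := inner_resa a (D (e2p p (τ, b))) c
          have e2 : ⟪iota a c, D (e2p p (τ, b))⟫_ℝ
              = ⟪D (e2p p (τ, b)), iota a c⟫_ℝ := real_inner_comm _ _
          have e3 : ⟪c, resa a (D (e2p p (τ, b)))⟫_ℝ
              = ⟪resa a (D (e2p p (τ, b))), c⟫_ℝ := real_inner_comm _ _
          linarith
        rw [h5, ← hk, real_inner_comm ((Dblk a a) k) c, hDaa_sa, hcd]
        exact coordZ k s
      rw [h3, h4, zero_sub]
    have f6 : B (eZ τ) = -k := by
      ext s
      have h1 : (B (eZ τ)) s = ⟪B (eZ τ), eZ s⟫_ℝ := (coordZ _ _).symm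
      rw [h1, hB s τ, f5 s]
      rw [lp.coeFn_neg]
      rfl
    -- final entrywise computation
    rw [hDblk a b t τ]
    rw [ContinuousLinearMap.neg_apply, ContinuousLinearMap.comp_apply, f6,
      map_neg, neg_neg, hk]
    rw [hh, inner_resa, iota_single]
end
end

section
/- (Theorem 3.4.) Under Assumption 2.1 and with B_{b→a} the node-wise regression coefficient matrix (so that D_{a,b} = −D_{a,a} B_{b→a}): (i) B_{b→a} = 0 if and only if D_{a,b} = 0; (ii) B_{b→a} is a bounded operator on ℓ²(ℤ); and (iii) if D_{a,a} and B_{b→a} are both Toeplitz, then D_{a,b} = −D_{a,a} B_{b→a} is Toeplitz. -/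
open scoped InnerProductSpace
open scoped ENNReal

noncomputable section

namespace Stmt16

open scoped ENNReal
set_option linter.unusedSectionVars false

variable {ι κ : Type*} [DecidableEq ι] [DecidableEq κ]

def extFun (r : κ → ι) (P : κ → Prop) [DecidablePred P] (v : ι → ℝ) : κ → ℝ :=
  fun k => if P k then v (r k) else 0

section
variable (e : ι → κ) (r : κ → ι) (P : κ → Prop) [DecidablePred P]

lemma einj (hre : ∀ i, r (e i) = i) : Function.Injective e := fun i j h => by
  have := congrArg r h; rwa [hre, hre] at this

lemma extFun_off (her : ∀ k, P k → e (r k) = k) (v : ι → ℝ) :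
    ∀ k ∉ Set.range e, extFun r P v k = 0 := by
  intro k hk
  rw [extFun, if_neg]
  exact fun hP => hk ⟨r k, her k hP⟩

lemma extFun_comp (he : ∀ i, P (e i)) (hre : ∀ i, r (e i) = i) (v : ι → ℝ) (i : ι) :
    extFun r P v (e i) = v i := by
  rw [extFun, if_pos (he i), hre]

lemma memℓp_ext (he : ∀ i, P (e i)) (hre : ∀ i, r (e i) = i) (her : ∀ k, P k → e (r k) = k)
    (v : lp (fun _ : ι => ℝ) 2) : Memℓp (extFun r P (v : ι → ℝ)) 2 := by
  have h2 : (0:ℝ) < (2:ℝ≥0∞).toReal := by norm_num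
  apply memℓp_gen
  have hs : Summable (fun i => ‖v i‖ ^ (2:ℝ≥0∞).toReal) := (memℓp_gen_iff h2).1 (lp.memℓp v)
  refine (((einj e r hre).summable_iff
    (f := fun k => ‖extFun r P (v : ι → ℝ) k‖ ^ (2:ℝ≥0∞).toReal)) ?_).1 ?_
  · intro k hk
    rw [extFun_off e r P her _ k hk]
    simp [Real.zero_rpow h2.ne']
  · refine hs.congr fun i => ?_
    simp only [Function.comp_apply, extFun_comp e r P he hre]

variable (he : ∀ i, P (e i)) (hre : ∀ i, r (e i) = i) (her : ∀ k, P k → e (r k) = k)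

noncomputable def extL (v : lp (fun _ : ι => ℝ) 2) : lp (fun _ : κ => ℝ) 2 :=
  ⟨extFun r P (v : ι → ℝ), memℓp_ext e r P he hre her v⟩

lemma extL_apply (v : lp (fun _ : ι => ℝ) 2) (k : κ) :
    (extL e r P he hre her v : κ → ℝ) k = if P k then v (r k) else 0 := rfl

lemma extL_norm (v : lp (fun _ : ι => ℝ) 2) : ‖extL e r P he hre her v‖ = ‖v‖ := by
  have h2 : (0:ℝ) < (2:ℝ≥0∞).toReal := by norm_num
  rw [lp.norm_eq_tsum_rpow h2, lp.norm_eq_tsum_rpow h2]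
  congr 1
  rw [← (einj e r hre).tsum_eq
    (f := fun k => ‖(extL e r P he hre her v : κ → ℝ) k‖ ^ (2:ℝ≥0∞).toReal)]
  · exact tsum_congr fun i => by rw [extL_apply, if_pos (he i), hre]
  · intro k hk
    simp only [Function.mem_support, ne_eq] at hk
    by_contra hk2
    apply hk
    rw [extL_apply]
    have : ¬ P k := fun hP => hk2 ⟨r k, her k hP⟩
    rw [if_neg this]
    simp [Real.zero_rpow h2.ne']

noncomputable def extCLM : lp (fun _ : ι => ℝ) 2 →L[ℝ] lp (fun _ : κ => ℝ) 2 :=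
  LinearMap.mkContinuous
    { toFun := extL e r P he hre her
      map_add' := fun u v => by
        apply lp.ext; funext k
        simp only [extL_apply, lp.coeFn_add, Pi.add_apply, extL]
        by_cases hP : P k <;> simp [extFun, hP]
      map_smul' := fun c v => by
        apply lp.ext; funext k
        simp only [extL_apply, lp.coeFn_smul, Pi.smul_apply, RingHom.id_apply, smul_eq_mul, extL]
        by_cases hP : P k <;> simp [extFun, hP] }
    1 (fun v => by rw [one_mul]; exact le_of_eq (extL_norm e r P he hre her v))

lemma extCLM_apply (v : lp (fun _ : ι => ℝ) 2) (k : κ) :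
    (extCLM e r P he hre her v : κ → ℝ) k = if P k then v (r k) else 0 := rfl

lemma extCLM_norm (v : lp (fun _ : ι => ℝ) 2) : ‖extCLM e r P he hre her v‖ = ‖v‖ :=
  extL_norm e r P he hre her v

lemma extCLM_single (i : ι) :
    extCLM e r P he hre her (lp.single 2 i (1:ℝ)) = lp.single 2 (e i) (1:ℝ) := by
  apply lp.ext; funext k
  rw [extCLM_apply]
  by_cases hk : k = e i
  · subst hk
    rw [if_pos (he i), hre, lp.single_apply_self, lp.single_apply_self]
  · rw [lp.single_apply_ne 2 _ _ hk]
    by_cases hP : P k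
    · rw [if_pos hP, lp.single_apply_ne]
      intro h
      exact hk (by rw [← her k hP, h])
    · rw [if_neg hP]
end
end Stmt16

set_option maxHeartbeats 1000000 in
/-- **Theorem 3.4.** Properties of the node-wise regression coefficient
matrix `B_{b→a}`: vanishing iff `D_{a,b}` vanishes, boundedness, and Toeplitz preservation. -/
theorem statement_16
    {H : Type*} [NormedAddCommGroup H] [InnerProductSpace ℝ H] [CompleteSpace H]
    (p : ℕ) (hp : 1 ≤ p) (x : ℤ × Fin p → H)
    (lamInf lamSup : ℝ)
    (hInf : IsGLB (gramQuadSet x) lamInf)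
    (hSup : IsLUB (gramQuadSet x) lamSup)
    (hpos : 0 < lamInf)
    (C : Ell2p p →L[ℝ] Ell2p p)
    (hC : ∀ i j : ℤ × Fin p, ⟪C (e2p p j), e2p p i⟫_ℝ = ⟪x i, x j⟫_ℝ)
    (hCsa : ∀ u v : Ell2p p, ⟪C u, v⟫_ℝ = ⟪u, C v⟫_ℝ)
    (hlo : ∀ v : Ell2p p, lamInf * ‖v‖ ^ 2 ≤ ⟪C v, v⟫_ℝ)
    (hhi : ∀ v : Ell2p p, ⟪C v, v⟫_ℝ ≤ lamSup * ‖v‖ ^ 2)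
    (D : Ell2p p →L[ℝ] Ell2p p)
    (hCD : C.comp D = ContinuousLinearMap.id ℝ (Ell2p p))
    (hDC : D.comp C = ContinuousLinearMap.id ℝ (Ell2p p))
    (a b : Fin p) (hab : b ≠ a)
    -- the node-wise regression coefficients `α t (τ, c) = α_{(τ,c)→(t,a)}`
    (α : ℤ → (ℤ × Fin p) → ℝ)
    (hα : ∀ t : ℤ, (∀ τ : ℤ, α t (τ, a) = 0) ∧
        Summable (fun j : ℤ × Fin p => (α t j) ^ 2) ∧
        ∃ y : H, HasSum (fun j : ℤ × Fin p => α t j • x j) y ∧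
          y ∈ (Submodule.span ℝ (x '' {k : ℤ × Fin p | k.2 ≠ a})).topologicalClosure ∧
          (∀ j : ℤ × Fin p, j.2 ≠ a → ⟪x (t, a) - y, x j⟫_ℝ = 0)) :
    -- (i) `B_{b→a} = 0` iff `D_{a,b} = 0`
    ((∀ t τ : ℤ, α t (τ, b) = 0) ↔
      (∀ t τ : ℤ, ⟪D (e2p p (τ, b)), e2p p (t, a)⟫_ℝ = 0)) ∧
    -- (ii) `B_{b→a}` is a bounded operator on `ℓ²(ℤ)`
    (∃ Bop : Ell2Z →L[ℝ] Ell2Z, ∀ t τ : ℤ, ⟪Bop (eZ τ), eZ t⟫_ℝ = α t (τ, b)) ∧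
    -- (iii) if `D_{a,a}` and `B_{b→a}` are Toeplitz then so is `D_{a,b}`
    (((∀ t τ : ℤ, ⟪D (e2p p (τ, a)), e2p p (t, a)⟫_ℝ =
          ⟪D (e2p p (τ + 1, a)), e2p p (t + 1, a)⟫_ℝ) ∧
      (∀ t τ : ℤ, α t (τ, b) = α (t + 1) (τ + 1, b))) →
      (∀ t τ : ℤ, ⟪D (e2p p (τ, b)), e2p p (t, a)⟫_ℝ =
          ⟪D (e2p p (τ + 1, b)), e2p p (t + 1, a)⟫_ℝ)) := by
  classical
  have h22 : ((2:ℝ≥0∞)).toReal = ((2:ℕ):ℝ) := by norm_num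
  -- coordinates as inner products
  have coordZ : ∀ (f : Ell2Z) (t : ℤ), ⟪f, eZ t⟫_ℝ = f t := fun f t => by
    rw [eZ, lp.inner_single_right]; simp
  have coordP : ∀ (f : Ell2p p) (j : ℤ × Fin p), ⟪f, e2p p j⟫_ℝ = f j := fun f j => by
    rw [e2p, lp.inner_single_right]; simp
  have coordP' : ∀ (f : Ell2p p) (j : ℤ × Fin p), ⟪e2p p j, f⟫_ℝ = f j := fun f j => by
    rw [e2p, lp.inner_single_left]; simp
  have extZ : ∀ (f g : Ell2Z), (∀ t, f t = g t) → f = g := fun f g h => lp.ext (funext h)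
  have extP : ∀ (f g : Ell2p p), (∀ j, f j = g j) → f = g := fun f g h => lp.ext (funext h)
  have hCD' : ∀ u, C (D u) = u := fun u => by
    have := ContinuousLinearMap.ext_iff.1 hCD u; simpa using this
  have hDC' : ∀ u, D (C u) = u := fun u => by
    have := ContinuousLinearMap.ext_iff.1 hDC u; simpa using this
  have hDsa : ∀ u v : Ell2p p, ⟪D u, v⟫_ℝ = ⟪u, D v⟫_ℝ := by
    intro u v
    calc ⟪D u, v⟫_ℝ = ⟪D u, C (D v)⟫_ℝ := by rw [hCD']
      _ = ⟪C (D u), D v⟫_ℝ := (hCsa _ _).symm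
      _ = ⟪u, D v⟫_ℝ := by rw [hCD']
  -- `lamSup` is positive
  have hSupPos : 0 < lamSup := by
    have hne : (e2p p (0, ⟨0, hp⟩)) ≠ 0 := by
      intro h
      have h0 := congrArg (fun f : Ell2p p => (f : (ℤ × Fin p) → ℝ) (0, ⟨0,hp⟩)) h
      simp only [e2p, lp.single_apply_self, lp.coeFn_zero, Pi.zero_apply] at h0
      exact one_ne_zero h0
    have h1 := hlo (e2p p (0, ⟨0, hp⟩))
    have h2' := hhi (e2p p (0, ⟨0, hp⟩))
    have hn : 0 < ‖e2p p (0, ⟨0,hp⟩)‖ ^ 2 := pow_pos (norm_pos_iff.2 hne) 2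
    nlinarith
  -- positivity and Cauchy-Schwarz for the form of `C`
  have hCpos : ∀ v : Ell2p p, 0 ≤ ⟪C v, v⟫_ℝ := fun v =>
    le_trans (mul_nonneg hpos.le (sq_nonneg _)) (hlo v)
  have hCS : ∀ u v : Ell2p p, ⟪C u, v⟫_ℝ^2 ≤ ⟪C u, u⟫_ℝ * ⟪C v, v⟫_ℝ := by
    intro u v
    have hsymm : ⟪C v, u⟫_ℝ = ⟪C u, v⟫_ℝ := by rw [hCsa, real_inner_comm]
    have hq : ∀ lam : ℝ, 0 ≤ ⟪C v, v⟫_ℝ * (lam*lam) + (2*⟪C u, v⟫_ℝ) * lam + ⟪C u, u⟫_ℝ := by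
      intro lam
      have h0 := hCpos (u + lam • v)
      have expand : ⟪C (u + lam•v), u + lam•v⟫_ℝ
          = ⟪C v, v⟫_ℝ * (lam*lam) + (2*⟪C u, v⟫_ℝ)*lam + ⟪C u, u⟫_ℝ := by
        rw [map_add, map_smul]
        simp only [inner_add_left, inner_add_right, real_inner_smul_left, real_inner_smul_right]
        rw [hsymm]; ring
      rw [expand] at h0
      exact h0
    have hd := discrim_le_zero hq
    rw [discrim] at hd
    nlinarith [hd]
  -- coercivity of `D`
  have hDco : ∀ v : Ell2p p, ‖v‖^2 ≤ lamSup * ⟪D v, v⟫_ℝ := by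
    intro v
    by_cases hv0 : v = 0
    · simp [hv0]
    have hv : C (D v) = v := hCD' v
    have h1 : ⟪D v, v⟫_ℝ = ⟪C (D v), D v⟫_ℝ := by
      rw [hv]; exact real_inner_comm _ _
    have h4 : ‖v‖^2 = ⟪C (D v), v⟫_ℝ := by
      rw [hv, real_inner_self_eq_norm_sq]
    have h5 := hCS (D v) v
    have h6 := hhi v
    have hn : 0 < ‖v‖^2 := pow_pos (norm_pos_iff.2 hv0) 2
    nlinarith [hCpos (D v), hCpos v]
  -- the embedding and projection operators for node `a`, and node `b`, and the shift
  set ιa : Ell2Z →L[ℝ] Ell2p p :=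
    Stmt16.extCLM (fun t : ℤ => ((t, a) : ℤ × Fin p)) Prod.fst (fun k => k.2 = a)
      (fun _ => rfl) (fun _ => rfl) (fun k hk => by rw [← hk]) with hιa_def
  set ιb : Ell2Z →L[ℝ] Ell2p p :=
    Stmt16.extCLM (fun t : ℤ => ((t, b) : ℤ × Fin p)) Prod.fst (fun k => k.2 = b)
      (fun _ => rfl) (fun _ => rfl) (fun k hk => by rw [← hk]) with hιb_def
  set S : Ell2Z →L[ℝ] Ell2Z :=
    Stmt16.extCLM (fun t : ℤ => t+1) (fun t => t-1) (fun _ => True)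
      (fun _ => trivial) (fun t => by show t + 1 - 1 = t; omega) (fun k _ => by show k - 1 + 1 = k; omega) with hS_def
  set pa : Ell2p p →L[ℝ] Ell2Z := ContinuousLinearMap.adjoint ιa with hpa_def
  have hιa_single : ∀ t : ℤ, ιa (eZ t) = e2p p (t,a) := fun t =>
    Stmt16.extCLM_single _ _ _ _ _ _ t
  have hιb_single : ∀ t : ℤ, ιb (eZ t) = e2p p (t,b) := fun t =>
    Stmt16.extCLM_single _ _ _ _ _ _ t
  have hS_single : ∀ t : ℤ, S (eZ t) = eZ (t+1) := fun t =>
    Stmt16.extCLM_single _ _ _ _ _ _ t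
  have hScoord : ∀ (v : Ell2Z) (u : ℤ), (S v) u = v (u - 1) := by
    intro v u
    rw [hS_def, Stmt16.extCLM_apply, if_pos trivial]
  have hpa_inner_l : ∀ (u : Ell2p p) (g : Ell2Z), ⟪pa u, g⟫_ℝ = ⟪u, ιa g⟫_ℝ := fun u g =>
    ContinuousLinearMap.adjoint_inner_left ιa g u
  have hpa_coord : ∀ (u : Ell2p p) (s : ℤ), (pa u) s = u (s, a) := by
    intro u s
    calc (pa u) s = ⟪pa u, eZ s⟫_ℝ := (coordZ _ _).symm
      _ = ⟪u, ιa (eZ s)⟫_ℝ := hpa_inner_l _ _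
      _ = ⟪u, e2p p (s,a)⟫_ℝ := by rw [hιa_single]
      _ = u (s,a) := coordP u _
  -- the block `D_{a,a}` as an operator on `ℓ²(ℤ)`
  set Da : Ell2Z →L[ℝ] Ell2Z := pa.comp (D.comp ιa) with hDa_def
  have hDa_apply : ∀ g, Da g = pa (D (ιa g)) := fun g => rfl
  have hDasa : ∀ g h : Ell2Z, ⟪Da g, h⟫_ℝ = ⟪g, Da h⟫_ℝ := by
    intro g h
    rw [hDa_apply, hDa_apply]
    calc ⟪pa (D (ιa g)), h⟫_ℝ = ⟪D (ιa g), ιa h⟫_ℝ := hpa_inner_l _ _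
      _ = ⟪ιa g, D (ιa h)⟫_ℝ := hDsa _ _
      _ = ⟪g, pa (D (ιa h))⟫_ℝ :=
        (ContinuousLinearMap.adjoint_inner_right ιa g (D (ιa h))).symm
  -- Lax-Milgram: `Da` is invertible
  set Bform : Ell2Z →L[ℝ] Ell2Z →L[ℝ] ℝ := (innerSL ℝ).comp Da with hBform_def
  have hBform : ∀ u v : Ell2Z, Bform u v = ⟪Da u, v⟫_ℝ := fun u v => rfl
  have coercive : IsCoercive Bform := by
    refine ⟨1/lamSup, by positivity, fun u => ?_⟩
    rw [hBform, hDa_apply]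
    have h1 : ⟪pa (D (ιa u)), u⟫_ℝ = ⟪D (ιa u), ιa u⟫_ℝ := hpa_inner_l _ _
    have h2 := hDco (ιa u)
    have h3 : ‖ιa u‖ = ‖u‖ := by rw [hιa_def]; exact Stmt16.extCLM_norm _ _ _ _ _ _ u
    rw [h3] at h2
    rw [h1]
    rw [div_mul_eq_mul_div, div_mul_eq_mul_div, div_le_iff₀ hSupPos]
    nlinarith
  set GE : Ell2Z ≃L[ℝ] Ell2Z := coercive.continuousLinearEquivOfBilin with hGE_def
  have hGE : ∀ v : Ell2Z, GE v = Da v := by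
    intro v
    refine ext_inner_right ℝ fun w => ?_
    rw [hGE_def]
    rw [coercive.continuousLinearEquivOfBilin_apply v w]
    exact hBform v w
  have hDaG : ∀ u, Da (GE.symm u) = u := fun u => by
    rw [← hGE]; exact GE.apply_symm_apply u
  have hGDa : ∀ u, GE.symm (Da u) = u := fun u => by
    have h := GE.symm_apply_apply u
    rw [hGE] at h
    exact h
  have hGsa : ∀ u v : Ell2Z, ⟪GE.symm u, v⟫_ℝ = ⟪u, GE.symm v⟫_ℝ := by
    intro u v
    calc ⟪GE.symm u, v⟫_ℝ = ⟪GE.symm u, Da (GE.symm v)⟫_ℝ := by rw [hDaG]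
      _ = ⟪Da (GE.symm u), GE.symm v⟫_ℝ := (hDasa _ _).symm
      _ = ⟪u, GE.symm v⟫_ℝ := by rw [hDaG]
  -- regression data
  have hα0 : ∀ t τ : ℤ, α t (τ, a) = 0 := fun t => (hα t).1
  have hαsq : ∀ t, Summable fun j => (α t j)^2 := fun t => (hα t).2.1
  choose y hy1 hy2 hy3 using fun t => (hα t).2.2
  have hmemA : ∀ t, Memℓp (α t) 2 := by
    intro t
    apply memℓp_gen
    refine Summable.congr (hαsq t) fun j => ?_
    rw [h22, Real.rpow_natCast, Real.norm_eq_abs]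
    exact (sq_abs _).symm
  set A : ℤ → Ell2p p := fun t => ⟨α t, hmemA t⟩ with hA_def
  have hAcoord : ∀ t j, (A t) j = α t j := fun t j => rfl
  set w : ℤ → Ell2p p := fun t => e2p p (t,a) - A t with hw_def
  have hwcoord : ∀ t j, (w t) j = (e2p p (t,a)) j - α t j := by
    intro t j
    rw [hw_def]
    simp only [lp.coeFn_sub, Pi.sub_apply, hAcoord]
  have hAsum : ∀ t, HasSum (fun j => α t j • e2p p j) (A t) := by
    intro t
    have h := lp.hasSum_single (E := fun _ : ℤ × Fin p => ℝ) ENNReal.ofNat_ne_top (A t)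
    have heq : (fun j => lp.single 2 j ((A t) j)) = fun j => α t j • e2p p j := by
      funext j
      rw [hAcoord, e2p, ← lp.single_smul, smul_eq_mul, mul_one]
    rwa [heq] at h
  -- the residual property: `C (w t)` vanishes off node `a`
  have hCw0 : ∀ (t : ℤ) (j : ℤ × Fin p), j.2 ≠ a → (C (w t)) j = 0 := by
    intro t j hj
    have hCA : ⟪e2p p j, C (A t)⟫_ℝ = ⟪x j, y t⟫_ℝ := by
      have h1 : HasSum (fun k => C (α t k • e2p p k)) (C (A t)) := C.hasSum (hAsum t)
      have h2 : HasSum (fun k => ⟪e2p p j, C (α t k • e2p p k)⟫_ℝ) ⟪e2p p j, C (A t)⟫_ℝ :=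
        (innerSL ℝ (e2p p j)).hasSum h1
      have h3 : HasSum (fun k => ⟪x j, α t k • x k⟫_ℝ) ⟪x j, y t⟫_ℝ :=
        (innerSL ℝ (x j)).hasSum (hy1 t)
      have heq : (fun k => ⟪e2p p j, C (α t k • e2p p k)⟫_ℝ)
          = fun k => ⟪x j, α t k • x k⟫_ℝ := by
        funext k
        rw [map_smul, inner_smul_right, inner_smul_right]
        congr 1
        rw [real_inner_comm]
        exact hC j k
      rw [heq] at h2
      exact h2.unique h3
    have hcoord : (C (w t)) j = ⟪e2p p j, C (w t)⟫_ℝ := (coordP' _ _).symm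
    rw [hcoord, hw_def]
    simp only
    rw [map_sub, inner_sub_right, hCA]
    have hCe : ⟪e2p p j, C (e2p p (t,a))⟫_ℝ = ⟪x j, x (t,a)⟫_ℝ := by
      rw [real_inner_comm]; exact hC j (t,a)
    rw [hCe, ← inner_sub_right, real_inner_comm]
    exact hy3 t j hj
  have hCwa : ∀ t, ιa (pa (C (w t))) = C (w t) := by
    intro t
    apply extP; intro j
    rw [hιa_def, Stmt16.extCLM_apply]
    by_cases hj : j.2 = a
    · rw [if_pos hj, hpa_coord]
      congr 1
      rw [← hj]
    · rw [if_neg hj]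
      exact (hCw0 t j hj).symm
  have hDag : ∀ t, Da (pa (C (w t))) = eZ t := by
    intro t
    rw [hDa_apply, hCwa, hDC']
    apply extZ; intro s
    rw [hpa_coord, hwcoord, hα0, sub_zero]
    rw [e2p, eZ]
    by_cases h : s = t
    · subst h
      rw [lp.single_apply_self, lp.single_apply_self]
    · rw [lp.single_apply_ne 2 _ _ (fun hh : (s,a) = (t,a) => h (congrArg Prod.fst hh)),
        lp.single_apply_ne 2 _ _ h]
  have hg : ∀ t, pa (C (w t)) = GE.symm (eZ t) := fun t => by
    rw [← hDag t, hGDa]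
  -- the columns of the block `D_{a,b}`
  set m : ℤ → Ell2Z := fun τ => pa (D (e2p p (τ, b))) with hm_def
  have hmcoord : ∀ τ t' : ℤ, m τ t' = ⟪D (e2p p (τ,b)), e2p p (t',a)⟫_ℝ := by
    intro τ t'
    rw [hm_def]
    simp only
    rw [hpa_coord]
    exact (coordP _ _).symm
  -- the key identity
  have keyL : ∀ t τ : ℤ, (GE.symm (m τ)) t = -α t (τ, b) := by
    intro t τ
    have hne : ((τ,b) : ℤ × Fin p) ≠ (t,a) := fun hh => hab (congrArg Prod.snd hh)
    calc (GE.symm (m τ)) t = ⟪GE.symm (m τ), eZ t⟫_ℝ := (coordZ _ _).symm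
      _ = ⟪m τ, GE.symm (eZ t)⟫_ℝ := hGsa _ _
      _ = ⟪m τ, pa (C (w t))⟫_ℝ := by rw [hg]
      _ = ⟪pa (D (e2p p (τ,b))), pa (C (w t))⟫_ℝ := by rw [hm_def]
      _ = ⟪D (e2p p (τ,b)), ιa (pa (C (w t)))⟫_ℝ := hpa_inner_l _ _
      _ = ⟪D (e2p p (τ,b)), C (w t)⟫_ℝ := by rw [hCwa]
      _ = ⟪e2p p (τ,b), D (C (w t))⟫_ℝ := hDsa _ _
      _ = ⟪e2p p (τ,b), w t⟫_ℝ := by rw [hDC']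
      _ = (w t) (τ, b) := coordP' _ _
      _ = (e2p p (t,a)) (τ,b) - α t (τ,b) := hwcoord t (τ,b)
      _ = -α t (τ,b) := by
          rw [e2p, lp.single_apply_ne 2 _ _ hne, zero_sub]
  refine ⟨⟨?_, ?_⟩, ?_, ?_⟩
  · -- (i) forward
    intro h0 t τ
    have hGm : GE.symm (m τ) = 0 := by
      apply extZ; intro s
      rw [keyL s τ, h0 s τ, neg_zero]
      simp
    have hm0 : m τ = 0 := by
      rw [← hDaG (m τ), hGm, map_zero]
    rw [← hmcoord τ t, hm0]
    simp
  · -- (i) backward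
    intro h0 t τ
    have hm0 : m τ = 0 := by
      apply extZ; intro s
      rw [hmcoord τ s, h0 s τ]
      simp
    have h := keyL t τ
    rw [hm0, map_zero] at h
    simp only [lp.coeFn_zero, Pi.zero_apply] at h
    linarith
  · -- (ii)
    refine ⟨-((GE.symm : Ell2Z →L[ℝ] Ell2Z).comp (pa.comp (D.comp ιb))), ?_⟩
    intro t τ
    have happ : (-((GE.symm : Ell2Z →L[ℝ] Ell2Z).comp (pa.comp (D.comp ιb)))) (eZ τ)
        = -(GE.symm (m τ)) := by
      simp only [ContinuousLinearMap.neg_apply, ContinuousLinearMap.comp_apply,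
        ContinuousLinearEquiv.coe_coe, hιb_single, hm_def]
    rw [happ, inner_neg_left, coordZ, keyL, neg_neg]
  · -- (iii)
    rintro ⟨hDaT, hαT⟩ t τ
    -- extensionality of operators via singles
    have hsumZ : ∀ (f : Ell2Z) (Aop : Ell2Z →L[ℝ] Ell2Z),
        HasSum (fun s => f s • Aop (eZ s)) (Aop f) := by
      intro f Aop
      have h := lp.hasSum_single (E := fun _ : ℤ => ℝ) ENNReal.ofNat_ne_top f
      have h2 := Aop.hasSum h
      have heq : (fun s => Aop (lp.single 2 s (f s))) = fun s => f s • Aop (eZ s) := by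
        funext s
        rw [show lp.single 2 s (f s) = f s • eZ s from by
          rw [eZ, ← lp.single_smul, smul_eq_mul, mul_one], map_smul]
      rwa [heq] at h2
    have hext : ∀ (A1 B1 : Ell2Z →L[ℝ] Ell2Z), (∀ s, A1 (eZ s) = B1 (eZ s)) →
        ∀ f, A1 f = B1 f := by
      intro A1 B1 h f
      have h1 := hsumZ f A1
      have h2 := hsumZ f B1
      have heq : (fun s => f s • A1 (eZ s)) = fun s => f s • B1 (eZ s) := by
        funext s; rw [h s]
      rw [heq] at h1
      exact h1.unique h2
    have hDacoord : ∀ σ u : ℤ, (Da (eZ σ)) u = ⟪D (e2p p (σ,a)), e2p p (u,a)⟫_ℝ := by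
      intro σ u
      rw [hDa_apply, hιa_single, hpa_coord]
      exact (coordP _ _).symm
    have hDaS : ∀ u, Da (S u) = S (Da u) := by
      have h := hext (Da.comp S) (S.comp Da) ?_
      · intro u
        have := h u
        simpa using this
      · intro s
        simp only [ContinuousLinearMap.comp_apply]
        rw [hS_single]
        apply extZ; intro u
        rw [hDacoord, hScoord, hDacoord]
        have h := hDaT (u-1) s
        have hu : u - 1 + 1 = u := by omega
        rw [hu] at h
        exact h.symm
    have hGS : ∀ u, GE.symm (S u) = S (GE.symm u) := by
      intro u
      conv_lhs => rw [← hDaG u]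
      rw [← hDaS, hGDa]
    have hGm' : GE.symm (m (τ+1)) = S (GE.symm (m τ)) := by
      apply extZ; intro s
      rw [keyL, hScoord, keyL]
      have h := hαT (s-1) τ
      have hs : s - 1 + 1 = s := by omega
      rw [hs] at h
      rw [h]
    have hmS : m (τ+1) = S (m τ) := by
      calc m (τ+1) = Da (GE.symm (m (τ+1))) := (hDaG _).symm
        _ = Da (S (GE.symm (m τ))) := by rw [hGm']
        _ = S (Da (GE.symm (m τ))) := hDaS _
        _ = S (m τ) := by rw [hDaG]
    have h1 : ⟪D (e2p p (τ+1, b)), e2p p (t+1, a)⟫_ℝ = m (τ+1) (t+1) := (hmcoord _ _).symm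
    rw [← hmcoord τ t, h1, hmS, hScoord]
    have : t + 1 - 1 = t := by omega
    rw [this]
end
end

section
/- (Lemma C.2, Baxter-type bound.) Under Assumption 2.1, fix n ≥ 1, 1 ≤ a ≤ p and 1 ≤ t ≤ n. Let β_{(τ,b)→(t,a)} (with β_{(t,a)→(t,a)} = 0) be the unique square-summable coefficients of the orthogonal projection of x_{(t,a)} onto the closed span of {x_{(τ,b)} : (τ,b) ≠ (t,a)}, and let θ_{(τ,b)→(t,a)} (with θ_{(t,a)→(t,a)} = 0) be the coefficients of the orthogonal projection of x_{(t,a)} onto the span of the finite family {x_{(τ,b)} : 1 ≤ τ ≤ n, 1 ≤ b ≤ p, (τ,b) ≠ (t,a)}. Then (Σ_{b=1}^{p} Σ_{τ=1}^{n} (β_{(τ,b)→(t,a)} − θ_{(τ,b)→(t,a)})²)^{1/2} ≤ λ_inf^{-1} λ_sup Σ_{b=1}^{p} Σ_{τ ∉ {1,…,n}} |β_{(τ,b)→(t,a)}|, provided the right-hand side is finite. -/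
open scoped InnerProductSpace

noncomputable section

lemma quad_bound_aux {H : Type*} [NormedAddCommGroup H] [InnerProductSpace ℝ H]
    {p : ℕ} (x : ℤ × Fin p → H) {lamInf lamSup : ℝ}
    (hInf : IsGLB (gramQuadSet x) lamInf) (hSup : IsLUB (gramQuadSet x) lamSup)
    (F : Finset (ℤ × Fin p)) (g : ℤ × Fin p → ℝ) :
    lamInf * ∑ j ∈ F, g j ^ 2 ≤ ‖∑ j ∈ F, g j • x j‖ ^ 2 ∧
    ‖∑ j ∈ F, g j • x j‖ ^ 2 ≤ lamSup * ∑ j ∈ F, g j ^ 2 := by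
  classical
  set D := ∑ j ∈ F, g j ^ 2 with hDdef
  have hD0 : 0 ≤ D := Finset.sum_nonneg fun _ _ => sq_nonneg _
  rcases eq_or_lt_of_le hD0 with h0 | hDpos
  · have hz : ∀ j ∈ F, g j = 0 := by
      intro j hj
      have := (Finset.sum_eq_zero_iff_of_nonneg (fun i _ => sq_nonneg (g i))).mp h0.symm j hj
      exact pow_eq_zero_iff (n := 2) (by norm_num) |>.mp this
    have hS : (∑ j ∈ F, g j • x j) = 0 :=
      Finset.sum_eq_zero fun j hj => by rw [hz j hj, zero_smul]
    rw [hS, ← h0]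
    simp
  · set c := Real.sqrt D with hcdef
    have hc : 0 < c := Real.sqrt_pos.mpr hDpos
    have hc2 : c ^ 2 = D := Real.sq_sqrt hD0
    set v : (ℤ × Fin p) →₀ ℝ :=
      Finsupp.onFinset F (fun j => if j ∈ F then g j / c else 0)
        (fun j hj => by by_contra h; simp [h] at hj) with hvdef
    have hvF : ∀ j ∈ F, v j = g j / c := fun j hj => if_pos hj
    have hsupp : v.support ⊆ F := Finsupp.support_onFinset_subset
    have hsq : ∑ i ∈ v.support, (v i) ^ 2 = 1 := by
      rw [Finset.sum_subset hsupp (fun i _ hi => by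
        rw [Finsupp.notMem_support_iff.mp hi]; ring)]
      have : ∑ i ∈ F, (v i) ^ 2 = ∑ i ∈ F, g i ^ 2 / c ^ 2 :=
        Finset.sum_congr rfl fun i hi => by rw [hvF i hi, div_pow]
      rw [this, ← Finset.sum_div, ← hDdef, hc2, div_self hDpos.ne']
    have hvec : ∑ i ∈ v.support, v i • x i = c⁻¹ • ∑ j ∈ F, g j • x j := by
      rw [Finset.sum_subset hsupp (fun i _ hi => by
        rw [Finsupp.notMem_support_iff.mp hi, zero_smul])]
      rw [Finset.smul_sum]
      exact Finset.sum_congr rfl fun i hi => by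
        rw [hvF i hi, div_eq_inv_mul, mul_smul]
    have hmem : ‖c⁻¹ • ∑ j ∈ F, g j • x j‖ ^ 2 ∈ gramQuadSet x := ⟨v, hsq, by rw [hvec]⟩
    have hr : ‖c⁻¹ • ∑ j ∈ F, g j • x j‖ ^ 2 = ‖∑ j ∈ F, g j • x j‖ ^ 2 / D := by
      rw [norm_smul, mul_pow, norm_inv, Real.norm_eq_abs, abs_of_pos hc, inv_pow, hc2]
      ring
    have h1 : lamInf ≤ ‖∑ j ∈ F, g j • x j‖ ^ 2 / D := hr ▸ hInf.1 hmem
    have h2 : ‖∑ j ∈ F, g j • x j‖ ^ 2 / D ≤ lamSup := hr ▸ hSup.1 hmem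
    constructor
    · have := mul_le_mul_of_nonneg_right h1 hD0
      rwa [div_mul_cancel₀ _ hDpos.ne'] at this
    · have := mul_le_mul_of_nonneg_right h2 hD0
      rwa [div_mul_cancel₀ _ hDpos.ne'] at this

set_option maxHeartbeats 1000000 in
/-- **Lemma C.2, Baxter-type bound.** The `ℓ²`-distance between the
coefficients of the infinite-sample and the finite-sample projections is bounded by
`λ_inf⁻¹ λ_sup` times the `ℓ¹`-tail of the infinite-sample coefficients. -/
theorem statement_17
    {H : Type*} [NormedAddCommGroup H] [InnerProductSpace ℝ H] [CompleteSpace H]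
    (p : ℕ) (hp : 1 ≤ p) (x : ℤ × Fin p → H)
    (lamInf lamSup : ℝ)
    (hInf : IsGLB (gramQuadSet x) lamInf)
    (hSup : IsLUB (gramQuadSet x) lamSup)
    (hpos : 0 < lamInf)
    (n : ℕ) (hn : 1 ≤ n) (a : Fin p) (t : ℤ) (ht : 1 ≤ t ∧ t ≤ (n : ℤ))
    -- coefficients of the projection of `x (t,a)` onto the span of all the other variables
    (β : (ℤ × Fin p) → ℝ) (y : H)
    (hβ0 : β (t, a) = 0)
    (hβsq : Summable (fun j : ℤ × Fin p => (β j) ^ 2))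
    (hβsum : HasSum (fun j : ℤ × Fin p => β j • x j) y)
    (hβorth : ∀ j : ℤ × Fin p, j ≠ (t, a) → ⟪x (t, a) - y, x j⟫_ℝ = 0)
    -- coefficients of the projection onto the finite family indexed by `{1,…,n} × {1,…,p}`
    (θ : (ℤ × Fin p) → ℝ)
    (hθ0 : θ (t, a) = 0)
    (hθsupp : ∀ j : ℤ × Fin p, j.1 ∉ Finset.Icc (1 : ℤ) (n : ℤ) → θ j = 0)
    (hθorth : ∀ k : ℤ × Fin p, k.1 ∈ Finset.Icc (1 : ℤ) (n : ℤ) → k ≠ (t, a) →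
        ⟪x (t, a) - ∑ j ∈ (Finset.Icc (1 : ℤ) (n : ℤ)) ×ˢ (Finset.univ : Finset (Fin p)),
            θ j • x j, x k⟫_ℝ = 0)
    -- the `ℓ¹`-tail of `β` is finite
    (htail : Summable (fun j : ℤ × Fin p =>
        if j.1 ∈ Finset.Icc (1 : ℤ) (n : ℤ) then 0 else |β j|)) :
    Real.sqrt (∑ j ∈ (Finset.Icc (1 : ℤ) (n : ℤ)) ×ˢ (Finset.univ : Finset (Fin p)),
        (β j - θ j) ^ 2) ≤
      lamInf⁻¹ * lamSup *
        ∑' j : ℤ × Fin p, (if j.1 ∈ Finset.Icc (1 : ℤ) (n : ℤ) then 0 else |β j|) := by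
  classical
  set F : Finset (ℤ × Fin p) :=
    (Finset.Icc (1 : ℤ) (n : ℤ)) ×ˢ (Finset.univ : Finset (Fin p)) with hF
  have hFmem : ∀ j : ℤ × Fin p, j ∈ F ↔ j.1 ∈ Finset.Icc (1 : ℤ) (n : ℤ) := by
    intro j; simp [hF, Finset.mem_product]
  set δ : ℤ × Fin p → ℝ := fun j => β j - θ j with hδ
  set S : H := ∑ j ∈ F, δ j • x j with hS
  set D : ℝ := ∑ j ∈ F, δ j ^ 2 with hD
  have hD0 : 0 ≤ D := Finset.sum_nonneg fun _ _ => sq_nonneg _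
  obtain ⟨hlow, hup⟩ := quad_bound_aux x hInf hSup F δ
  rw [← hD, ← hS] at hlow hup
  -- bounds on the norms of the x j
  have hxj : ∀ j : ℤ × Fin p, ‖x j‖ ^ 2 ≤ lamSup := by
    intro j
    have h := (quad_bound_aux x hInf hSup {j} (fun _ => 1)).2
    simpa using h
  have hsup0 : 0 ≤ lamSup := le_trans (sq_nonneg _) (hxj ((0 : ℤ), ⟨0, hp⟩))
  have hxj' : ∀ j, ‖x j‖ ≤ Real.sqrt lamSup := fun j => by
    have h := Real.sqrt_le_sqrt (hxj j)
    rwa [Real.sqrt_sq (norm_nonneg _)] at h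
  -- the tail sum
  set T : ℝ := ∑' j : ℤ × Fin p,
      (if j.1 ∈ Finset.Icc (1 : ℤ) (n : ℤ) then 0 else |β j|) with hT
  have hT0 : 0 ≤ T := tsum_nonneg fun j => by
    by_cases h : j.1 ∈ Finset.Icc (1 : ℤ) (n : ℤ) <;> simp [h, abs_nonneg]
  have hindF : ∀ j ∈ F,
      (if j.1 ∈ Finset.Icc (1 : ℤ) (n : ℤ) then 0 else |β j|) = 0 :=
    fun j hj => if_pos ((hFmem j).mp hj)
  have hindC : ∀ j : ↑((↑F : Set (ℤ × Fin p))ᶜ),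
      (if (j : ℤ × Fin p).1 ∈ Finset.Icc (1 : ℤ) (n : ℤ) then 0 else |β ↑j|) = |β ↑j| :=
    fun j => if_neg (fun h => j.2 ((hFmem _).mpr h))
  have hTc : ∑' (j : ↑((↑F : Set (ℤ × Fin p))ᶜ)), |β (↑j : ℤ × Fin p)| = T := by
    have h1 := Summable.sum_add_tsum_compl (s := F) htail
    rw [Finset.sum_eq_zero hindF, zero_add] at h1
    rw [hT, ← h1]
    exact tsum_congr fun j => (hindC j).symm
  have hβcsum : Summable (fun j : ↑((↑F : Set (ℤ × Fin p))ᶜ) => |β (↑j : ℤ × Fin p)|) := by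
    have h := htail.subtype ((↑F : Set (ℤ × Fin p))ᶜ)
    exact h.congr fun j => hindC j
  -- orthogonality
  set W : H := y - ∑ j ∈ F, β j • x j with hW
  have hSW : S + W = y - ∑ j ∈ F, θ j • x j := by
    rw [hS, hW]
    have : ∑ j ∈ F, δ j • x j = ∑ j ∈ F, β j • x j - ∑ j ∈ F, θ j • x j := by
      rw [← Finset.sum_sub_distrib]
      exact Finset.sum_congr rfl fun j _ => by simp [hδ, sub_smul]
    rw [this]; abel
  have horth : ∀ k ∈ F, k ≠ (t, a) → ⟪S + W, x k⟫_ℝ = 0 := by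
    intro k hk hkne
    rw [hSW]
    have h1 : ⟪x (t, a) - y, x k⟫_ℝ = 0 := hβorth k hkne
    have h2 := hθorth k ((hFmem k).mp hk) hkne
    have h3 : (y - ∑ j ∈ F, θ j • x j)
        = (x (t, a) - ∑ j ∈ F, θ j • x j) - (x (t, a) - y) := by abel
    rw [h3, inner_sub_left, h2, h1, sub_zero]
  have hdz : δ (t, a) = 0 := by simp [hδ, hβ0, hθ0]
  -- ‖S‖² = -⟪S, W⟫
  have hnorm : ‖S‖ ^ 2 = -⟪S, W⟫_ℝ := by
    have e1 : ⟪S, S⟫_ℝ = ∑ k ∈ F, δ k * ⟪S, x k⟫_ℝ := by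
      nth_rewrite 2 [hS]
      rw [inner_sum]
      exact Finset.sum_congr rfl fun k _ => real_inner_smul_right _ _ _
    have e2 : ⟪S, W⟫_ℝ = ∑ k ∈ F, δ k * ⟪W, x k⟫_ℝ := by
      rw [real_inner_comm, hS, inner_sum]
      exact Finset.sum_congr rfl fun k _ => real_inner_smul_right _ _ _
    have e3 : ∑ k ∈ F, δ k * ⟪S + W, x k⟫_ℝ = 0 := Finset.sum_eq_zero fun k hk => by
      by_cases hkta : k = (t, a)
      · rw [hkta, hdz, zero_mul]
      · rw [horth k hk hkta, mul_zero]
    simp only [inner_add_left, mul_add, Finset.sum_add_distrib] at e3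
    rw [← e1, ← e2] at e3
    rw [← real_inner_self_eq_norm_sq]
    linarith
  -- the inner product against the tail
  have hfsum : HasSum (fun j : ℤ × Fin p => β j * ⟪S, x j⟫_ℝ) ⟪S, y⟫_ℝ := by
    have h := (innerSL ℝ S).hasSum hβsum
    simpa [real_inner_smul_right] using h
  have hfs : Summable (fun j : ℤ × Fin p => β j * ⟪S, x j⟫_ℝ) := hfsum.summable
  have hcompl := Summable.sum_add_tsum_compl (s := F) hfs
  rw [hfsum.tsum_eq] at hcompl
  have hSWval : ⟪S, W⟫_ℝ
      = ∑' (j : ↑((↑F : Set (ℤ × Fin p))ᶜ)), β (↑j : ℤ × Fin p) * ⟪S, x ↑j⟫_ℝ := by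
    rw [hW, inner_sub_right, inner_sum]
    have h4 : ∑ j ∈ F, ⟪S, β j • x j⟫_ℝ = ∑ j ∈ F, β j * ⟪S, x j⟫_ℝ :=
      Finset.sum_congr rfl fun j _ => real_inner_smul_right _ _ _
    rw [h4, ← hcompl]; ring
  set C : ℝ := ‖S‖ * Real.sqrt lamSup with hC
  have hC0 : 0 ≤ C := mul_nonneg (norm_nonneg _) (Real.sqrt_nonneg _)
  have hfb : ∀ j : ℤ × Fin p, |β j * ⟪S, x j⟫_ℝ| ≤ |β j| * C := fun j => by
    rw [abs_mul, hC]
    exact mul_le_mul_of_nonneg_left (le_trans (abs_real_inner_le_norm _ _)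
      (mul_le_mul_of_nonneg_left (hxj' j) (norm_nonneg _))) (abs_nonneg _)
  have hbCsum : Summable (fun j : ↑((↑F : Set (ℤ × Fin p))ᶜ) => |β (↑j : ℤ × Fin p)| * C) :=
    hβcsum.mul_right C
  have habs : Summable (fun j : ↑((↑F : Set (ℤ × Fin p))ᶜ) => |β (↑j : ℤ × Fin p) * ⟪S, x ↑j⟫_ℝ|) :=
    Summable.of_nonneg_of_le (fun j => abs_nonneg _) (fun j => hfb ↑j) hbCsum
  have hbound : ‖S‖ ^ 2 ≤ T * C := by
    calc ‖S‖ ^ 2 = -⟪S, W⟫_ℝ := hnorm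
    _ ≤ |⟪S, W⟫_ℝ| := neg_le_abs _
    _ = |∑' (j : ↑((↑F : Set (ℤ × Fin p))ᶜ)), β (↑j : ℤ × Fin p) * ⟪S, x ↑j⟫_ℝ| := by
        rw [hSWval]
    _ ≤ ∑' (j : ↑((↑F : Set (ℤ × Fin p))ᶜ)), |β (↑j : ℤ × Fin p) * ⟪S, x ↑j⟫_ℝ| := by
        have h := norm_tsum_le_tsum_norm
          (f := fun j : ↑((↑F : Set (ℤ × Fin p))ᶜ) => β (↑j : ℤ × Fin p) * ⟪S, x ↑j⟫_ℝ)
          (habs.congr fun j => (Real.norm_eq_abs _).symm)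
        simpa only [Real.norm_eq_abs] using h
    _ ≤ ∑' (j : ↑((↑F : Set (ℤ × Fin p))ᶜ)), |β (↑j : ℤ × Fin p)| * C :=
        Summable.tsum_le_tsum (fun j => hfb ↑j) habs hbCsum
    _ = (∑' (j : ↑((↑F : Set (ℤ × Fin p))ᶜ)), |β (↑j : ℤ × Fin p)|) * C := tsum_mul_right
    _ = T * C := by rw [hTc]
  -- putting things together
  have hSD : ‖S‖ ≤ Real.sqrt lamSup * Real.sqrt D := by
    have h1 : ‖S‖ = Real.sqrt (‖S‖ ^ 2) := (Real.sqrt_sq (norm_nonneg _)).symm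
    rw [h1, ← Real.sqrt_mul hsup0]
    exact Real.sqrt_le_sqrt hup
  have hkey : lamInf * D ≤ lamSup * Real.sqrt D * T := by
    have h2 : ‖S‖ ^ 2 ≤ (Real.sqrt lamSup * Real.sqrt D) * (Real.sqrt lamSup * T) := by
      calc ‖S‖ ^ 2 ≤ T * C := hbound
      _ = ‖S‖ * (Real.sqrt lamSup * T) := by rw [hC]; ring
      _ ≤ (Real.sqrt lamSup * Real.sqrt D) * (Real.sqrt lamSup * T) :=
          mul_le_mul_of_nonneg_right hSD (mul_nonneg (Real.sqrt_nonneg _) hT0)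
    have h3 : (Real.sqrt lamSup * Real.sqrt D) * (Real.sqrt lamSup * T)
        = lamSup * Real.sqrt D * T := by
      have h5 : Real.sqrt lamSup * Real.sqrt lamSup = lamSup := Real.mul_self_sqrt hsup0
      calc (Real.sqrt lamSup * Real.sqrt D) * (Real.sqrt lamSup * T)
          = (Real.sqrt lamSup * Real.sqrt lamSup) * Real.sqrt D * T := by ring
      _ = lamSup * Real.sqrt D * T := by rw [h5]
    linarith
  have hDsq : D = Real.sqrt D * Real.sqrt D := (Real.mul_self_sqrt hD0).symm
  rcases eq_or_lt_of_le (Real.sqrt_nonneg D) with hz | hzpos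
  · rw [← hz]
    exact mul_nonneg (mul_nonneg (inv_nonneg.mpr hpos.le) hsup0) hT0
  · have h6 : lamInf * Real.sqrt D ≤ lamSup * T := by
      nlinarith [hkey, hzpos, hDsq]
    calc Real.sqrt D = lamInf⁻¹ * (lamInf * Real.sqrt D) := by field_simp
    _ ≤ lamInf⁻¹ * (lamSup * T) :=
        mul_le_mul_of_nonneg_left h6 (inv_nonneg.mpr hpos.le)
    _ = lamInf⁻¹ * lamSup * T := by ring
end
end

section
/- (Lemma D.1, convolution bound for monotone sequences.) Let ℓ : ℤ → (0,∞) be a function of |j| such that j ↦ ℓ(j)^{-1} is nonincreasing in |j| and Σ_{j∈ℤ} |j|^K ℓ(j)^{-1} < ∞ for some K ≥ 2. Then for every r ∈ ℤ, Σ_{s∈ℤ} 1/(ℓ(s)ℓ(s+r)) ≤ 3·ℓ(⌊|r|/2⌋)^{-1}·Σ_{s∈ℤ} ℓ(s)^{-1}; consequently, defining ℓ̃(j) = [3 ℓ(⌊|j|/2⌋)^{-1} Σ_{s∈ℤ} ℓ(s)^{-1}]^{-1}, one has Σ_{s∈ℤ} 1/(ℓ(s)ℓ(s+r)) ≤ ℓ̃(r)^{-1}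 for all r and Σ_{j∈ℤ} |j|^K ℓ̃(j)^{-1} < ∞. -/
noncomputable section

open Function

set_option maxHeartbeats 1000000 in
/-- **Lemma D.1, convolution bound for monotone sequences.** -/
theorem statement_18
    (ℓ : ℤ → ℝ) (hpos : ∀ j : ℤ, 0 < ℓ j)
    (hsymm : ∀ j : ℤ, ℓ (-j) = ℓ j)
    (hmono : ∀ j j' : ℤ, |j| ≤ |j'| → ℓ j ≤ ℓ j')
    (K : ℝ) (hK : 2 ≤ K)
    (hsum : Summable (fun j : ℤ => (|j| : ℝ) ^ K * (ℓ j)⁻¹)) :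
    (∀ r : ℤ,
      Summable (fun s : ℤ => (ℓ s * ℓ (s + r))⁻¹) ∧
      (∑' s : ℤ, (ℓ s * ℓ (s + r))⁻¹) ≤
        3 * (ℓ (|r| / 2))⁻¹ * ∑' s : ℤ, (ℓ s)⁻¹) ∧
    Summable (fun j : ℤ =>
      (|j| : ℝ) ^ K * (3 * (ℓ (|j| / 2))⁻¹ * ∑' s : ℤ, (ℓ s)⁻¹)) := by
  have hKnn : (0:ℝ) ≤ K := by linarith
  have hinvpos : ∀ j : ℤ, 0 < (ℓ j)⁻¹ := fun j => inv_pos.2 (hpos j)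
  -- summability of the "if j = 0" correction terms
  have hif : ∀ c : ℝ, Summable (fun j : ℤ => if j = 0 then c else 0) := by
    intro c
    apply summable_of_ne_finset_zero (s := ({0} : Finset ℤ))
    intro b hb
    simp only [Finset.mem_singleton] at hb
    simp [hb]
  -- summability of (ℓ s)⁻¹
  have hS : Summable fun s : ℤ => (ℓ s)⁻¹ := by
    apply Summable.of_nonneg_of_le (fun j => (hinvpos j).le)
      (f := fun j : ℤ => (|j| : ℝ) ^ K * (ℓ j)⁻¹ + (if j = 0 then (ℓ 0)⁻¹ else 0))
    · intro j
      by_cases hj : j = 0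
      · subst hj
        have h0 : (0:ℝ) ≤ (|((0:ℤ):ℝ)|) ^ K * (ℓ 0)⁻¹ :=
          mul_nonneg (Real.rpow_nonneg (abs_nonneg _) K) (hinvpos 0).le
        simp only [eq_self_iff_true, if_true]
        linarith
      · have h1 : (1:ℝ) ≤ (|((j:ℤ):ℝ)|) ^ K := by
          apply Real.one_le_rpow _ hKnn
          have := Int.one_le_abs hj
          have h2 : (1:ℝ) ≤ ((|j| : ℤ) : ℝ) := by exact_mod_cast this
          rwa [Int.cast_abs] at h2
        simp only [hj, if_false, add_zero]
        nlinarith [(hinvpos j).le]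
    · exact hsum.add (hif _)
  have hSnn : (0:ℝ) ≤ ∑' s : ℤ, (ℓ s)⁻¹ := tsum_nonneg fun s => (hinvpos s).le
  constructor
  · intro r
    set m : ℤ := |r| / 2 with hm
    have hm0 : 0 ≤ m := Int.ediv_nonneg (abs_nonneg r) (by norm_num)
    have hshift : Summable fun s : ℤ => (ℓ (s + r))⁻¹ :=
      hS.comp_injective (add_left_injective r)
    have key : ∀ s : ℤ, (ℓ s * ℓ (s + r))⁻¹ ≤ (ℓ m)⁻¹ * ((ℓ s)⁻¹ + (ℓ (s + r))⁻¹) := by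
      intro s
      have hcase : m ≤ |s| ∨ m ≤ |s + r| := by
        have htri : |r| ≤ |s + r| + |s| := by
          have h := abs_sub (s + r) s
          simpa using h
        rw [hm]
        generalize |r| = c at htri ⊢
        generalize |s| = a at htri ⊢
        generalize |s + r| = b at htri ⊢
        omega
      rw [mul_inv]
      rcases hcase with h | h
      · have h1 : (ℓ s)⁻¹ ≤ (ℓ m)⁻¹ :=
          inv_anti₀ (hpos m) (hmono m s (by rwa [abs_of_nonneg hm0]))
        nlinarith [(hinvpos s).le, (hinvpos (s+r)).le, (hinvpos m).le]
      · have h1 : (ℓ (s + r))⁻¹ ≤ (ℓ m)⁻¹ :=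
          inv_anti₀ (hpos m) (hmono m (s + r) (by rwa [abs_of_nonneg hm0]))
        nlinarith [(hinvpos s).le, (hinvpos (s+r)).le, (hinvpos m).le]
    have hbig : Summable fun s : ℤ => (ℓ m)⁻¹ * ((ℓ s)⁻¹ + (ℓ (s + r))⁻¹) :=
      (hS.add hshift).mul_left _
    have hsum1 : Summable fun s : ℤ => (ℓ s * ℓ (s + r))⁻¹ := by
      apply Summable.of_nonneg_of_le _ key hbig
      intro s
      exact (inv_pos.2 (mul_pos (hpos s) (hpos (s + r)))).le
    refine ⟨hsum1, ?_⟩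
    have hts := Summable.tsum_le_tsum key hsum1 hbig
    rw [tsum_mul_left, Summable.tsum_add hS hshift] at hts
    have hshift_eq : ∑' s : ℤ, (ℓ (s + r))⁻¹ = ∑' s : ℤ, (ℓ s)⁻¹ :=
      (Equiv.addRight r).tsum_eq (fun s => (ℓ s)⁻¹)
    rw [hshift_eq] at hts
    calc ∑' s : ℤ, (ℓ s * ℓ (s + r))⁻¹
        ≤ (ℓ m)⁻¹ * ((∑' s : ℤ, (ℓ s)⁻¹) + ∑' s : ℤ, (ℓ s)⁻¹) := hts
      _ ≤ 3 * (ℓ m)⁻¹ * ∑' s : ℤ, (ℓ s)⁻¹ := by nlinarith [(hinvpos m).le, hSnn]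
  · -- second part
    set G : ℤ → ℝ := fun k => ((|k| + 1 : ℤ) : ℝ) ^ K * (ℓ k)⁻¹ with hGdef
    have hGnn : ∀ k, 0 ≤ G k := fun k =>
      mul_nonneg (Real.rpow_nonneg (by positivity) K) (hinvpos k).le
    have hG : Summable G := by
      apply Summable.of_nonneg_of_le hGnn
        (f := fun k : ℤ => (2:ℝ) ^ K * ((|k| : ℝ) ^ K * (ℓ k)⁻¹) + (if k = 0 then (ℓ 0)⁻¹ else 0))
      · intro k
        by_cases hk : k = 0
        · subst hk
          have h1 : (0:ℝ) ≤ (2:ℝ) ^ K * ((|((0:ℤ):ℝ)|) ^ K * (ℓ 0)⁻¹) :=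
            mul_nonneg (Real.rpow_nonneg (by norm_num) K)
              (mul_nonneg (Real.rpow_nonneg (abs_nonneg _) K) (hinvpos 0).le)
          have h2 : G 0 = (ℓ 0)⁻¹ := by
            simp only [hGdef, abs_zero, zero_add, Int.cast_one, Real.one_rpow, one_mul]
          rw [h2, if_pos rfl]
          linarith
        · show ((|k| + 1 : ℤ) : ℝ) ^ K * (ℓ k)⁻¹ ≤ _
          simp only [hk, if_false, add_zero]
          rw [← mul_assoc, ← Real.mul_rpow (by norm_num) (abs_nonneg _)]
          apply mul_le_mul_of_nonneg_right _ (hinvpos k).le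
          apply Real.rpow_le_rpow (by positivity) _ hKnn
          have h1 : (1:ℤ) ≤ |k| := Int.one_le_abs hk
          have h2 : |k| + 1 ≤ 2 * |k| := by linarith
          have h3 : ((|k| + 1 : ℤ) : ℝ) ≤ ((2 * |k| : ℤ) : ℝ) := by exact_mod_cast h2
          rw [Int.cast_mul, Int.cast_abs] at h3
          push_cast at h3 ⊢
          linarith
      · exact (hsum.mul_left _).add (hif _)
    -- G restricted to ℕ
    have hu : Summable fun n : ℕ => G (n : ℤ) :=
      hG.comp_injective (fun a b h => by exact_mod_cast h)
    have huhalf : Summable fun n : ℕ => G ((n / 2 : ℕ) : ℤ) := by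
      have heven : Summable fun k : ℕ => G (((2 * k) / 2 : ℕ) : ℤ) := by
        have he : ∀ k : ℕ, (2 * k) / 2 = k := fun k => by omega
        simpa only [he] using hu
      have hodd : Summable fun k : ℕ => G (((2 * k + 1) / 2 : ℕ) : ℤ) := by
        have ho : ∀ k : ℕ, (2 * k + 1) / 2 = k := fun k => by omega
        simpa only [ho] using hu
      exact (heven.hasSum.even_add_odd hodd.hasSum).summable
    have hGhalf : Summable fun j : ℤ => G (|j| / 2) := by
      apply Summable.of_nat_of_neg
      · have hc : ∀ n : ℕ, |((n:ℤ))| / 2 = ((n / 2 : ℕ) : ℤ) := by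
          intro n
          rw [abs_of_nonneg (Int.natCast_nonneg n)]
          omega
        simpa only [hc] using huhalf
      · have hc : ∀ n : ℕ, |(-(n:ℤ))| / 2 = ((n / 2 : ℕ) : ℤ) := by
          intro n
          rw [abs_neg, abs_of_nonneg (Int.natCast_nonneg n)]
          omega
        simpa only [hc] using huhalf
    have hcore : Summable fun j : ℤ => (|j| : ℝ) ^ K * (ℓ (|j| / 2))⁻¹ := by
      apply Summable.of_nonneg_of_le
        (fun j => mul_nonneg (Real.rpow_nonneg (abs_nonneg _) K) (hinvpos _).le)
        (f := fun j : ℤ => (2:ℝ) ^ K * G (|j| / 2)) _ (hGhalf.mul_left _)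
      intro j
      have hm0 : 0 ≤ |j| / 2 := Int.ediv_nonneg (abs_nonneg j) (by norm_num)
      have habs : |(|j| / 2)| = |j| / 2 := abs_of_nonneg hm0
      have hjle : |j| ≤ 2 * (|j| / 2) + 1 := by
        generalize |j| = a
        omega
      show (|((j:ℤ):ℝ)|) ^ K * (ℓ (|j| / 2))⁻¹ ≤
        (2:ℝ) ^ K * (((|(|j| / 2)| + 1 : ℤ) : ℝ) ^ K * (ℓ (|j| / 2))⁻¹)
      rw [habs, ← mul_assoc, ← Real.mul_rpow (by norm_num) (by positivity)]
      apply mul_le_mul_of_nonneg_right _ (hinvpos _).le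
      apply Real.rpow_le_rpow (abs_nonneg _) _ hKnn
      have h3 : ((|j| : ℤ) : ℝ) ≤ ((2 * (|j| / 2) + 1 : ℤ) : ℝ) := by exact_mod_cast hjle
      rw [Int.cast_abs] at h3
      push_cast at h3 ⊢
      linarith
    have h2 : (fun j : ℤ => (|j| : ℝ) ^ K * (3 * (ℓ (|j| / 2))⁻¹ * ∑' s : ℤ, (ℓ s)⁻¹)) =
        fun j : ℤ => ((|j| : ℝ) ^ K * (ℓ (|j| / 2))⁻¹) * (3 * ∑' s : ℤ, (ℓ s)⁻¹) := by
      funext j; ring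
    rw [h2]
    exact hcore.mul_right _
end
end
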